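/- arXiv:2105.09238 — 8 statements merged into one kernel-verified Lean document; each statement's English description precedes it below -/
import Mathlib

section
/- The kernel I of h equals the ideal of F[t_1, …, t_m] generated by the polynomials P_L, where L ranges over the minimal linear relations only. -/
open scoped TensorProduct
open MvPolynomial

noncomputable section

def zpoly {F : Type} [Field F] {n m : ℕ} (c : Fin m → Fin n → F) (i : Fin m) :
    MvPolynomial (Fin n) F :=
  ∑ j, C (c i j) * X j

def lsupp {F : Type} [Field F] {m : ℕ} (a : Fin m → F) : Finset (Fin m) :=
  @Finset.filter _ (fun i => a i ≠ 0) (Classical.decPred _) Finset.univ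

def IsLinRel {F : Type} [Field F] {n m : ℕ} (c : Fin m → Fin n → F) (a : Fin m → F) : Prop :=
  2 ≤ (lsupp a).card ∧ ∑ i ∈ lsupp a, C (a i) * zpoly c i = 0

def tMon {F : Type} [Field F] {m : ℕ} (M : Finset (Fin m)) : MvPolynomial (Fin m) F :=
  ∏ i ∈ M, X i

def PL {F : Type} [Field F] {m : ℕ} (a : Fin m → F) : MvPolynomial (Fin m) F :=
  ∑ i ∈ lsupp a, C (a i) * tMon (lsupp a \ {i})

abbrev ExtAlg (F : Type) [Field F] (k : ℕ) := ExteriorAlgebra F (Fin k → F)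

def uGen {F : Type} [Field F] {m : ℕ} (i : Fin m) : ExtAlg F m :=
  ExteriorAlgebra.ι F (Pi.single i 1)

def uList {F : Type} [Field F] {m : ℕ} (l : List (Fin m)) : ExtAlg F m :=
  (l.map uGen).prod

def uM {F : Type} [Field F] {m : ℕ} (M : Finset (Fin m)) : ExtAlg F m :=
  uList (M.sort (· ≤ ·))

abbrev XiAlg (F : Type) [Field F] (m : ℕ) := MvPolynomial (Fin m) F ⊗[F] ExtAlg F m

def PLS {F : Type} [Field F] {m : ℕ} (a : Fin m → F) (S : Finset (Fin m)) : XiAlg F m :=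
  ∑ i ∈ lsupp a \ S,
    (C (a i) * tMon (lsupp a \ insert i S)) ⊗ₜ[F]
      (uM S - ∑ s ∈ Finset.range (S.sort (· ≤ ·)).length, uList ((S.sort (· ≤ ·)).set s i))

/-- A linear relation is minimal if it is not the sum of two linear relations with
strictly smaller supports. -/
def IsMinRel {F : Type} [Field F] {n m : ℕ} (c : Fin m → Fin n → F) (a : Fin m → F) : Prop :=
  IsLinRel c a ∧
    ¬ ∃ a₁ a₂ : Fin m → F, IsLinRel c a₁ ∧ IsLinRel c a₂ ∧ a = a₁ + a₂ ∧
      lsupp a₁ ⊂ lsupp a ∧ lsupp a₂ ⊂ lsupp a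

/-!
Each `P_L` lies in the kernel: under `t ↦ z⁻¹` it becomes `(∏_{j ∈ |L|} z_j⁻¹) · ∑ a_i z_i`.
Conversely, the `P_L` for circuits `L` (which are minimal relations) straighten every monomial,
modulo the ideal they generate, into a combination of NBC monomials, i.e. monomials whose support
contains no circuit with its least element removed. The images of distinct NBC monomials are
linearly independent: after clearing denominators this says that the products
`∏ z_i ^ (N - β_i)` are independent, which follows by deletion and restriction of the last form.
So a kernel element straightens to zero and lies in the ideal.
-/

section Dependence

variable (F : Type*) {V ι : Type*} [Field F] [AddCommGroup V] [Module F V] [Fintype ι]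

def IsDependent (v : ι → V) (S : Finset ι) : Prop :=
  ∃ a : ι → F, a ≠ 0 ∧ (∀ i ∉ S, a i = 0) ∧ ∑ i, a i • v i = 0

def IsCircuit (v : ι → V) (C : Finset ι) : Prop :=
  IsDependent F v C ∧ ∀ T ⊂ C, ¬ IsDependent F v T

/-- `B` contains no broken circuit, a broken circuit being a circuit with its least element
removed. -/
def IsNBC [LinearOrder ι] (v : ι → V) (B : Finset ι) : Prop :=
  ∀ C, IsCircuit F v C → ∀ i ∈ C, (∀ j ∈ C, i ≤ j) → ¬ C.erase i ⊆ B

variable {F} {v : ι → V}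

theorem IsDependent.exists_isCircuit_subset {S : Finset ι} (hS : IsDependent F v S) :
    ∃ C ⊆ S, IsCircuit F v C := by
  induction S using Finset.strongInduction with
  | H S ih =>
    by_cases hmin : ∀ T ⊂ S, ¬ IsDependent F v T
    · exact ⟨S, subset_rfl, hS, hmin⟩
    · simp only [not_forall, not_not] at hmin
      obtain ⟨T, hTS, hT⟩ := hmin
      obtain ⟨C, hCT, hC⟩ := ih T hTS hT
      exact ⟨C, hCT.trans hTS.subset, hC⟩

theorem IsCircuit.nonempty {C : Finset ι} (hC : IsCircuit F v C) : C.Nonempty := by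
  obtain ⟨a, ha, hsupp, -⟩ := hC.1
  obtain ⟨i, hi⟩ := Function.ne_iff.mp ha
  exact ⟨i, by_contra fun h => hi (hsupp i h)⟩

theorem IsCircuit.exists_relation {C : Finset ι} (hC : IsCircuit F v C) :
    ∃ a : ι → F, (∀ i, a i ≠ 0 ↔ i ∈ C) ∧ ∑ i, a i • v i = 0 := by
  classical
  obtain ⟨⟨a, ha, hsupp, hrel⟩, hmin⟩ := hC
  refine ⟨a, fun i => ⟨fun hi => by_contra fun h => hi (hsupp i h), fun hi hai => ?_⟩, hrel⟩
  refine hmin _ (Finset.erase_ssubset hi) ⟨a, ha, fun j hj => ?_, hrel⟩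
  by_cases hji : j = i
  · exact hji ▸ hai
  · exact hsupp j fun h => hj (Finset.mem_erase.mpr ⟨hji, h⟩)

theorem IsCircuit.two_le_card (hv : ∀ i, v i ≠ 0) {C : Finset ι} (hC : IsCircuit F v C) :
    2 ≤ C.card := by
  by_contra! hcard
  have : Nonempty ι := ⟨hC.nonempty.choose⟩
  obtain ⟨i, hi⟩ := Finset.card_le_one_iff_subset_singleton.mp (Nat.le_of_lt_succ hcard)
  obtain ⟨a, ha, hsupp, hrel⟩ := hC.1
  have hzero : ∀ j ≠ i, a j = 0 := fun j hj => hsupp j fun h => hj (Finset.mem_singleton.mp (hi h))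
  rw [Finset.sum_eq_single i (fun j _ hj => by rw [hzero j hj, zero_smul]) (by simp)] at hrel
  have hai : a i = 0 := (smul_eq_zero.mp hrel).resolve_right (hv i)
  exact ha (funext fun j => by by_cases hj : j = i <;> simp_all)

theorem isDependent_singleton [DecidableEq ι] {i : ι} (hi : v i = 0) : IsDependent F v {i} :=
  ⟨Pi.single i (1 : F), fun h => one_ne_zero (α := F) (by simpa using congrFun h i),
    fun j hj => Pi.single_eq_of_ne (by simpa using hj) _, by simp [Pi.single_apply, hi]⟩

variable [LinearOrder ι]

/-- A circuit `C ⊆ D` has its broken circuit inside `D.erase x`. -/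
theorem IsNBC.not_erase_subset {B D : Finset ι} (hB : IsNBC F v B) (hD : IsDependent F v D)
    {x : ι} (hx : ∀ y ∈ D, x ≤ y) : ¬ D.erase x ⊆ B := by
  intro hsub
  obtain ⟨C, hCD, hC⟩ := hD.exists_isCircuit_subset
  have hne := hC.nonempty
  refine hB C hC _ (C.min'_mem hne) (fun j hj => C.min'_le j hj) fun y hy => hsub ?_
  obtain ⟨hyi, hyC⟩ := Finset.mem_erase.mp hy
  refine Finset.mem_erase.mpr ⟨fun hyx => hyi ?_, hCD hyC⟩
  subst hyx
  exact le_antisymm (hx _ (hCD (C.min'_mem hne))) (C.min'_le _ hyC)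

end Dependence

section DeletionRestriction

variable {F V : Type*} [Field F] [AddCommGroup V] [Module F V] {m : ℕ} {v : Fin (m + 1) → V}

theorem IsDependent.of_castSucc {S : Finset (Fin m)}
    (hS : IsDependent F (fun i => v i.castSucc) S) :
    IsDependent F v (S.map Fin.castSuccEmb) := by
  obtain ⟨μ, hμ, hsupp, hrel⟩ := hS
  refine ⟨Fin.snoc μ 0, fun h => hμ ?_, fun x hx => ?_, ?_⟩
  · exact funext fun i => by simpa using congrFun h i.castSucc
  · induction x using Fin.lastCases with
    | last => simp
    | cast i => simpa using hsupp i (by simpa using hx)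
  · simpa [Fin.sum_univ_castSucc] using hrel

theorem IsDependent.of_sub_smul_last {t : Fin m → F} {S : Finset (Fin m)}
    (hS : IsDependent F (fun i => v i.castSucc - t i • v (Fin.last m)) S) :
    IsDependent F v (insert (Fin.last m) (S.map Fin.castSuccEmb)) := by
  obtain ⟨μ, hμ, hsupp, hrel⟩ := hS
  refine ⟨Fin.snoc μ (-∑ i, μ i * t i), fun h => hμ ?_, fun x hx => ?_, ?_⟩
  · exact funext fun i => by simpa using congrFun h i.castSucc
  · induction x using Fin.lastCases with
    | last => simp at hx
    | cast i => simpa using hsupp i (by simpa using hx)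
  · simp only [smul_sub, smul_smul, Finset.sum_sub_distrib, ← Finset.sum_smul] at hrel
    simp [Fin.sum_univ_castSucc, sub_eq_zero.mp hrel]

theorem IsNBC.castSucc {B : Finset (Fin (m + 1))} {B' : Finset (Fin m)} (hB : IsNBC F v B)
    (hB' : ∀ i ∈ B', i.castSucc ∈ B) : IsNBC F (fun i => v i.castSucc) B' := by
  intro C hC i hi hmin hsub
  refine hB.not_erase_subset hC.1.of_castSucc (x := i.castSucc) (by simpa using hmin) ?_
  intro y hy
  simp only [Finset.mem_erase, Finset.mem_map, Fin.coe_castSuccEmb] at hy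
  obtain ⟨hyi, j, hj, rfl⟩ := hy
  exact hB' j (hsub (Finset.mem_erase.mpr ⟨fun h => hyi (h ▸ rfl), hj⟩))

theorem IsNBC.sub_smul_last {B : Finset (Fin (m + 1))} {B' : Finset (Fin m)} (hB : IsNBC F v B)
    (hlast : Fin.last m ∈ B) (hB' : ∀ i ∈ B', i.castSucc ∈ B) (t : Fin m → F) :
    IsNBC F (fun i => v i.castSucc - t i • v (Fin.last m)) B' := by
  intro C hC i hi hmin hsub
  refine hB.not_erase_subset hC.1.of_sub_smul_last (x := i.castSucc) ?_ ?_
  · simpa [Fin.le_last] using hmin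
  intro y hy
  simp only [Finset.mem_erase, Finset.mem_insert, Finset.mem_map, Fin.coe_castSuccEmb] at hy
  obtain ⟨hyi, rfl | ⟨j, hj, rfl⟩⟩ := hy
  · exact hlast
  · exact hB' j (hsub (Finset.mem_erase.mpr ⟨fun h => hyi (h ▸ rfl), hj⟩))

theorem IsNBC.sub_smul_last_ne_zero {B : Finset (Fin (m + 1))} (hB : IsNBC F v B)
    (hlast : Fin.last m ∈ B) (i : Fin m) (a : F) : v i.castSucc - a • v (Fin.last m) ≠ 0 := by
  intro h
  have hdep := (isDependent_singleton (F := F)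
    (v := fun j : Fin m => v j.castSucc - a • v (Fin.last m)) h).of_sub_smul_last
  refine hB.not_erase_subset hdep (x := i.castSucc) ?_ ?_
  · simp [Fin.le_last]
  · intro y hy
    simp only [Finset.mem_erase, Finset.map_singleton, Finset.mem_insert, Finset.mem_singleton,
      Fin.coe_castSuccEmb] at hy
    obtain ⟨hyi, rfl | rfl⟩ := hy
    · exact hlast
    · exact absurd rfl hyi

end DeletionRestriction

section LinearRelations

variable {F : Type} [Field F] {n m : ℕ} {c : Fin m → Fin n → F}

theorem mem_lsupp {a : Fin m → F} {i : Fin m} : i ∈ lsupp a ↔ a i ≠ 0 := by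
  simp [lsupp]

theorem zpoly_ne_zero {i : Fin m} (h : c i ≠ 0) : zpoly c i ≠ 0 := by
  obtain ⟨j, hj⟩ := Function.ne_iff.mp h
  intro h0
  exact hj (by simpa [zpoly, Pi.single_apply] using congrArg (eval (Pi.single j (1 : F))) h0)

theorem sum_lsupp_C_mul {σ : Type} (a : Fin m → F) (z : Fin m → MvPolynomial σ F) :
    ∑ i ∈ lsupp a, C (a i) * z i = ∑ i, a i • z i := by
  rw [Finset.sum_subset (Finset.subset_univ _) fun i _ hi => by
    rw [not_not.mp (mt mem_lsupp.mpr hi), map_zero, zero_mul]]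
  simp only [smul_eq_C_mul]

theorem IsLinRel.isDependent {a : Fin m → F} (h : IsLinRel c a) :
    IsDependent F (zpoly c) (lsupp a) := by
  obtain ⟨i, hi⟩ : (lsupp a).Nonempty := Finset.card_pos.mp (by linarith [h.1])
  refine ⟨a, fun h0 => mem_lsupp.mp hi (congrFun h0 i), fun j hj => ?_, ?_⟩
  · exact not_not.mp (mt mem_lsupp.mpr hj)
  · rw [← sum_lsupp_C_mul]; exact h.2

theorem IsCircuit.isMinRel (hc : ∀ i, c i ≠ 0) {C : Finset (Fin m)}
    (hC : IsCircuit F (zpoly c) C) {a : Fin m → F} (ha : ∀ i, a i ≠ 0 ↔ i ∈ C)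
    (hrel : ∑ i, a i • zpoly c i = 0) : IsMinRel c a := by
  have hsupp : lsupp a = C := Finset.ext fun i => mem_lsupp.trans (ha i)
  refine ⟨⟨hsupp ▸ hC.two_le_card fun i => zpoly_ne_zero (hc i), ?_⟩, ?_⟩
  · rw [sum_lsupp_C_mul]; exact hrel
  · rintro ⟨a₁, -, h₁, -, -, hs₁, -⟩
    exact hC.2 _ (hsupp ▸ hs₁) h₁.isDependent

/-- Under `t ↦ z⁻¹`, `P_L` becomes `(∏_{j ∈ |L|} z_j⁻¹) · ∑ a_i z_i`. -/
theorem aeval_PL_eq_zero {R : Type} [CommRing R] [Algebra F R]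
    [Algebra (MvPolynomial (Fin n) F) R] [IsScalarTower F (MvPolynomial (Fin n) F) R]
    {zinv : Fin m → R} (hzinv : ∀ i, algebraMap _ R (zpoly c i) * zinv i = 1)
    {a : Fin m → F} (ha : IsLinRel c a) : aeval zinv (PL a) = 0 := by
  have hprod : ∀ i ∈ lsupp a, ∏ j ∈ lsupp a \ {i}, zinv j =
      algebraMap _ R (zpoly c i) * ∏ j ∈ lsupp a, zinv j := by
    intro i hi
    rw [← Finset.mul_prod_erase _ _ hi, ← mul_assoc, hzinv, one_mul,
      Finset.sdiff_singleton_eq_erase]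
  calc aeval zinv (PL a)
      = ∑ i ∈ lsupp a, algebraMap F R (a i) * ∏ j ∈ lsupp a \ {i}, zinv j := by
        simp [PL, tMon, map_prod]
    _ = algebraMap _ R (∑ i ∈ lsupp a, C (a i) * zpoly c i) * ∏ j ∈ lsupp a, zinv j := by
        rw [map_sum, Finset.sum_mul]
        refine Finset.sum_congr rfl fun i hi => ?_
        rw [hprod i hi, map_mul, ← algebraMap_eq, ← IsScalarTower.algebraMap_apply, mul_assoc]
    _ = 0 := by rw [ha.2, map_zero, zero_mul]

end LinearRelations

section Straightening

variable {F : Type} [Field F] {n m : ℕ} {c : Fin m → Fin n → F}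

def sqfreeExp (S : Finset (Fin m)) : Fin m →₀ ℕ :=
  ∑ j ∈ S, Finsupp.single j 1

theorem tMon_eq_monomial (S : Finset (Fin m)) :
    (tMon S : MvPolynomial (Fin m) F) = monomial (sqfreeExp S) 1 := by
  rw [tMon, sqfreeExp, monomial_sum_one]
  rfl

theorem sqfreeExp_le {S : Finset (Fin m)} {d : Fin m →₀ ℕ} (h : S ⊆ d.support) :
    sqfreeExp S ≤ d := by
  classical
  intro j
  simp only [sqfreeExp, Finsupp.finsetSum_apply, Finsupp.single_apply, Finset.sum_ite_eq']
  split_ifs with hj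
  · exact Nat.one_le_iff_ne_zero.mpr (Finsupp.mem_support_iff.mp (h hj))
  · exact Nat.zero_le _

theorem weight_sqfreeExp (w : Fin m → ℕ) (S : Finset (Fin m)) :
    Finsupp.weight w (sqfreeExp S) = ∑ j ∈ S, w j := by
  simp [sqfreeExp, Finsupp.weight_single]

def minRelIdeal (c : Fin m → Fin n → F) : Ideal (MvPolynomial (Fin m) F) :=
  Ideal.span {p | ∃ a : Fin m → F, IsMinRel c a ∧ p = PL a}

def nbcSubmodule (c : Fin m → Fin n → F) : Submodule F (MvPolynomial (Fin m) F) :=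
  restrictSupport F {d | IsNBC F (zpoly c) d.support}

/-- If `d` contains the broken circuit `C.erase i₀`, then multiplying `P_L` (for the relation on
`C`) by a monomial expresses `t^d` through monomials obtained by trading some `t_i`, `i ∈ C`,
for `t_{i₀}`; these have smaller weight `∑ d_j 2^j`. -/
theorem monomial_mem_minRelIdeal_sup_nbcSubmodule (hc : ∀ i, c i ≠ 0) (d : Fin m →₀ ℕ) :
    monomial d (1 : F) ∈ (minRelIdeal c).restrictScalars F ⊔ nbcSubmodule c := by
  classical
  set K := (minRelIdeal c).restrictScalars F ⊔ nbcSubmodule c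
  set wt : (Fin m →₀ ℕ) →+ ℕ := Finsupp.weight fun i : Fin m => 2 ^ (i : ℕ)
  induction hk : wt d using Nat.strong_induction_on generalizing d with
  | _ k ih =>
  by_cases hnbc : IsNBC F (zpoly c) d.support
  · refine Submodule.mem_sup_right ?_
    simpa [nbcSubmodule, mem_restrictSupport_iff, support_monomial] using hnbc
  obtain ⟨C, hC, i₀, hi₀, hmin, hsub⟩ : ∃ C, IsCircuit F (zpoly c) C ∧
      ∃ i₀ ∈ C, (∀ j ∈ C, i₀ ≤ j) ∧ C.erase i₀ ⊆ d.support := by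
    simpa [IsNBC] using hnbc
  obtain ⟨a, ha, hrel⟩ := hC.exists_relation
  have hsupp : lsupp a = C := Finset.ext fun i => mem_lsupp.trans (ha i)
  set e := d - sqfreeExp (C.erase i₀)
  have hd : e + sqfreeExp (C.erase i₀) = d := tsub_add_cancel_of_le (sqfreeExp_le hsub)
  have hPL : monomial e 1 * PL a =
      ∑ i ∈ C, a i • monomial (e + sqfreeExp (C.erase i)) (1 : F) := by
    simp [PL, hsupp, Finset.mul_sum, tMon_eq_monomial, Finset.sdiff_singleton_eq_erase,
      monomial_mul, smul_eq_C_mul, mul_left_comm]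
  have hlt : ∀ i ∈ C.erase i₀, wt (e + sqfreeExp (C.erase i)) < k := by
    intro i hi
    have h₁ := Finset.sum_erase_add C (fun j => 2 ^ (j : ℕ)) (Finset.mem_of_mem_erase hi)
    have h₀ := Finset.sum_erase_add C (fun j => 2 ^ (j : ℕ)) hi₀
    have hi₀i : i₀ < i :=
      lt_of_le_of_ne (hmin i (Finset.mem_of_mem_erase hi)) (Finset.ne_of_mem_erase hi).symm
    have hpow : 2 ^ (i₀ : ℕ) < 2 ^ (i : ℕ) := Nat.pow_lt_pow_right (by norm_num) hi₀i
    rw [← hk, ← hd, map_add, map_add, weight_sqfreeExp, weight_sqfreeExp]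
    omega
  have hmono : monomial d (1 : F) = (a i₀)⁻¹ • (monomial e 1 * PL a -
      ∑ i ∈ C.erase i₀, a i • monomial (e + sqfreeExp (C.erase i)) 1) := by
    rw [hPL, ← Finset.add_sum_erase _ _ hi₀, add_sub_cancel_right, hd, smul_smul,
      inv_mul_cancel₀ ((ha i₀).mpr hi₀), one_smul]
  rw [hmono]
  refine K.smul_mem _ (K.sub_mem ?_ (K.sum_mem fun i hi => K.smul_mem _ (ih _ (hlt i hi) _ rfl)))
  exact Submodule.mem_sup_left
    (Ideal.mul_mem_left _ _ (Ideal.subset_span ⟨a, hC.isMinRel hc ha hrel, rfl⟩))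

theorem mem_minRelIdeal_sup_nbcSubmodule (hc : ∀ i, c i ≠ 0) (p : MvPolynomial (Fin m) F) :
    p ∈ (minRelIdeal c).restrictScalars F ⊔ nbcSubmodule c := by
  induction p using MvPolynomial.induction_on' with
  | monomial d a =>
    rw [← mul_one a, ← smul_eq_mul, ← smul_monomial]
    exact Submodule.smul_mem _ _ (monomial_mem_minRelIdeal_sup_nbcSubmodule hc d)
  | add p q hp hq => exact Submodule.add_mem _ hp hq

end Straightening

section Independence

variable {F : Type} [Field F] {n : ℕ}

/-- When `c_last ⬝ᵥ v = 1`, these rows give the forms `z_i` restricted to the hyperplane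
`z_last = 0`, written in the coordinates `x`. -/
def restrictRows {m : ℕ} (c : Fin (m + 1) → Fin n → F) (v : Fin n → F) : Fin m → Fin n → F :=
  fun i => c i.castSucc - (c i.castSucc ⬝ᵥ v) • c (Fin.last m)

theorem zpoly_restrictRows {m : ℕ} (c : Fin (m + 1) → Fin n → F) (v : Fin n → F) :
    zpoly (restrictRows c v) =
      fun i => zpoly c i.castSucc - (c i.castSucc ⬝ᵥ v) • zpoly c (Fin.last m) := by
  ext1 i
  simp [zpoly, restrictRows, Finset.smul_sum, sub_mul, Finset.sum_sub_distrib, smul_eq_C_mul,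
    mul_assoc]

theorem aeval_zpoly_shift {m : ℕ} (c : Fin m → Fin n → F) (v : Fin n → F)
    (Y : Polynomial (MvPolynomial (Fin n) F)) (i : Fin m) :
    aeval (fun j => Polynomial.C (X j) + Polynomial.C (C (v j)) * Y) (zpoly c i) =
      Polynomial.C (zpoly c i) + Polynomial.C (C (c i ⬝ᵥ v)) * Y := by
  simp [zpoly, dotProduct, mul_add, Finset.sum_add_distrib, Finset.sum_mul, ← mul_assoc,
    Polynomial.algebraMap_apply, algebraMap_eq]

/-- Substituting `x ↦ x + v (T - z_L)` sends `z_L` to `T` and `z_i` to `z''_i + (c_i ⬝ v) T`;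
the coefficient of `T ^ (N - k)` then isolates the terms with `β_L = k`. -/
theorem sum_filter_eq_zero_of_restrictRows {m : ℕ} (c : Fin (m + 1) → Fin n → F) {v : Fin n → F}
    (hv : c (Fin.last m) ⬝ᵥ v = 1) {N k : ℕ} (hkN : k ≤ N) {s : Finset (Fin (m + 1) → ℕ)}
    (hk : ∀ β ∈ s, β (Fin.last m) ≤ k) (γ : (Fin (m + 1) → ℕ) → F)
    (h : ∑ β ∈ s, γ β • ∏ i, zpoly c i ^ (N - β i) = 0) :
    ∑ β ∈ s with β (Fin.last m) = k,
      γ β • ∏ i, zpoly (restrictRows c v) i ^ (N - Fin.init β i) = 0 := by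
  set σ : MvPolynomial (Fin n) F →ₐ[F] Polynomial (MvPolynomial (Fin n) F) :=
    aeval fun j => Polynomial.C (X j) +
    Polynomial.C (C (v j)) * (Polynomial.X - Polynomial.C (zpoly c (Fin.last m)))
  have hσ : ∀ i : Fin m, σ (zpoly c i.castSucc) = Polynomial.C (zpoly (restrictRows c v) i) +
      Polynomial.C (C (c i.castSucc ⬝ᵥ v)) * Polynomial.X := by
    intro i
    rw [aeval_zpoly_shift, zpoly_restrictRows]
    simp only [smul_eq_C_mul, map_sub, map_mul]
    ring
  have hσL : σ (zpoly c (Fin.last m)) = Polynomial.X := by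
    rw [aeval_zpoly_shift, hv, map_one, map_one, one_mul, add_sub_cancel]
  have hcoeff : ∀ β ∈ s, (σ (∏ i, zpoly c i ^ (N - β i))).coeff (N - k) =
      if β (Fin.last m) = k then ∏ i, zpoly (restrictRows c v) i ^ (N - Fin.init β i) else 0 := by
    intro β hβ
    have := hk β hβ
    rw [map_prod, Fin.prod_univ_castSucc, map_pow, hσL, Polynomial.coeff_mul_X_pow']
    split_ifs with h₁ h₂ h₂
    · rw [h₂, Nat.sub_self, Polynomial.coeff_zero_eq_eval_zero]
      simp [hσ, Polynomial.eval_prod, Fin.init]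
    · omega
    · omega
    · rfl
  have hT := congrArg (fun p => (σ p).coeff (N - k)) h
  simp only [map_sum, map_smul, Polynomial.finsetSum_coeff, Polynomial.coeff_smul, map_zero,
    Polynomial.coeff_zero] at hT
  rw [Finset.sum_filter]
  refine Eq.trans (Finset.sum_congr rfl fun β hβ => ?_) hT
  rw [hcoeff β hβ, smul_ite, smul_zero]

theorem sum_eq_zero_of_castSucc {m : ℕ} {c : Fin (m + 1) → Fin n → F}
    (hc : c (Fin.last m) ≠ 0) {N : ℕ} {s : Finset (Fin (m + 1) → ℕ)}
    (hs : ∀ β ∈ s, β (Fin.last m) = 0) (γ : (Fin (m + 1) → ℕ) → F)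
    (h : ∑ β ∈ s, γ β • ∏ i, zpoly c i ^ (N - β i) = 0) :
    ∑ β ∈ s, γ β • ∏ i, zpoly c i.castSucc ^ (N - Fin.init β i) = 0 := by
  have hmul : (∑ β ∈ s, γ β • ∏ i, zpoly c i.castSucc ^ (N - Fin.init β i)) *
      zpoly c (Fin.last m) ^ N = 0 := by
    rw [← h, Finset.sum_mul]
    refine Finset.sum_congr rfl fun β hβ => ?_
    rw [Fin.prod_univ_castSucc, hs β hβ, Nat.sub_zero, smul_mul_assoc]
    rfl
  exact (mul_eq_zero.mp hmul).resolve_right (pow_ne_zero _ (zpoly_ne_zero hc))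

theorem exists_relation_on_top_slice {m : ℕ} {c : Fin (m + 1) → Fin n → F} (hc : ∀ i, c i ≠ 0)
    {N k : ℕ} {s : Finset (Fin (m + 1) → ℕ)} {γ : (Fin (m + 1) → ℕ) → F}
    (hN : ∀ β ∈ s, ∀ i, β i ≤ N)
    (hnbc : ∀ β ∈ s, IsNBC F (zpoly c) (Finset.univ.filter fun i => β i ≠ 0))
    (hk : ∀ β ∈ s, β (Fin.last m) ≤ k) {β₀ : Fin (m + 1) → ℕ} (hβ₀ : β₀ ∈ s)
    (hβ₀k : β₀ (Fin.last m) = k) (h : ∑ β ∈ s, γ β • ∏ i, zpoly c i ^ (N - β i) = 0) :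
    ∃ c' : Fin m → Fin n → F, (∀ i, c' i ≠ 0) ∧
      (∀ β ∈ s, β (Fin.last m) = k →
        IsNBC F (zpoly c') (Finset.univ.filter fun i => Fin.init β i ≠ 0)) ∧
      ∑ β ∈ s with β (Fin.last m) = k, γ β • ∏ i, zpoly c' i ^ (N - Fin.init β i) = 0 := by
  have hinit : ∀ β : Fin (m + 1) → ℕ, ∀ i ∈ Finset.univ.filter (fun i => Fin.init β i ≠ 0),
      i.castSucc ∈ Finset.univ.filter fun i => β i ≠ 0 := by
    intro β i hi
    simpa [Fin.init] using (Finset.mem_filter.mp hi).2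
  rcases Nat.eq_zero_or_pos k with rfl | hk₀
  · have hs : ∀ β ∈ s, β (Fin.last m) = 0 := fun β hβ => Nat.le_zero.mp (hk β hβ)
    refine ⟨fun i => c i.castSucc, fun i => hc _, fun β hβ _ => (hnbc β hβ).castSucc (hinit β),
      ?_⟩
    rw [Finset.filter_true_of_mem hs]
    exact sum_eq_zero_of_castSucc (hc _) hs γ h
  obtain ⟨j, hj⟩ := Function.ne_iff.mp (hc (Fin.last m))
  set v : Fin n → F := Pi.single j (c (Fin.last m) j)⁻¹
  have hv : c (Fin.last m) ⬝ᵥ v = 1 := by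
    simpa [v, dotProduct, Pi.single_apply] using mul_inv_cancel₀ hj
  have hlast : ∀ β ∈ s, β (Fin.last m) = k →
      Fin.last m ∈ Finset.univ.filter fun i => β i ≠ 0 := by
    intro β _ hβk
    simp [hβk, hk₀.ne']
  refine ⟨restrictRows c v, fun i h0 => ?_, fun β hβ hβk => ?_,
    sum_filter_eq_zero_of_restrictRows c hv (hβ₀k ▸ hN β₀ hβ₀ _) hk γ h⟩
  · refine (hnbc β₀ hβ₀).sub_smul_last_ne_zero (hlast β₀ hβ₀ hβ₀k) i (c i.castSucc ⬝ᵥ v) ?_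
    simpa [zpoly, h0] using (congrFun (zpoly_restrictRows c v) i).symm
  · rw [zpoly_restrictRows]
    exact (hnbc β hβ).sub_smul_last (hlast β hβ hβk) (hinit β) _

/-- Induction on `m`: delete the last form if no `β` uses it, and otherwise restrict to
`z_last = 0`, keeping only the `β` with maximal `β_last`. -/
theorem eq_empty_of_sum_smul_prod_zpoly_eq_zero : ∀ {m : ℕ} {c : Fin m → Fin n → F},
    (∀ i, c i ≠ 0) → ∀ {N : ℕ} {s : Finset (Fin m → ℕ)} {γ : (Fin m → ℕ) → F},
    (∀ β ∈ s, γ β ≠ 0) → (∀ β ∈ s, ∀ i, β i ≤ N) →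
    (∀ β ∈ s, IsNBC F (zpoly c) (Finset.univ.filter fun i => β i ≠ 0)) →
    ∑ β ∈ s, γ β • ∏ i, zpoly c i ^ (N - β i) = 0 → s = ∅
  | 0, _, _, _, s, γ, hγ, _, _, h => by
    by_contra hs
    obtain ⟨β, hβ⟩ := Finset.nonempty_iff_ne_empty.mpr hs
    rw [Finset.sum_eq_single_of_mem β hβ fun β' _ hne => absurd (Subsingleton.elim β' β) hne]
      at h
    exact hγ β hβ (by simpa using h)
  | m + 1, c, hc, N, s, γ, hγ, hN, hnbc, h => by
    by_contra hs
    obtain ⟨β₀, hβ₀, hk⟩ :=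
      s.exists_mem_eq_sup (Finset.nonempty_iff_ne_empty.mpr hs) (· (Fin.last m))
    have hle : ∀ β ∈ s, β (Fin.last m) ≤ s.sup (· (Fin.last m)) :=
      fun β hβ => Finset.le_sup (f := (· (Fin.last m))) hβ
    obtain ⟨c', hc', hnbc', h'⟩ := exists_relation_on_top_slice hc hN hnbc hle hβ₀ hk.symm h
    set t := s.filter (· (Fin.last m) = s.sup (· (Fin.last m)))
    have hsnoc : ∀ β ∈ t, Fin.snoc (Fin.init β) (s.sup (· (Fin.last m))) = β :=
      fun β hβ => (Finset.mem_filter.mp hβ).2 ▸ Fin.snoc_init_self β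
    have hinj : Set.InjOn Fin.init (t : Set (Fin (m + 1) → ℕ)) := fun β₁ h₁ β₂ h₂ he => by
      rw [← hsnoc β₁ h₁, ← hsnoc β₂ h₂, he]
    have hempty := eq_empty_of_sum_smul_prod_zpoly_eq_zero hc' (s := t.image Fin.init)
      (γ := fun b => γ (Fin.snoc b (s.sup (· (Fin.last m))))) (N := N) ?_ ?_ ?_ ?_
    · exact Finset.notMem_empty β₀ (Finset.image_eq_empty.mp hempty ▸
        Finset.mem_filter.mpr ⟨hβ₀, hk.symm⟩)
    · simp only [Finset.forall_mem_image]
      exact fun β hβ => by rw [hsnoc β hβ]; exact hγ β (Finset.mem_filter.mp hβ).1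
    · simp only [Finset.forall_mem_image]
      exact fun β hβ i => hN β (Finset.mem_filter.mp hβ).1 _
    · simp only [Finset.forall_mem_image]
      exact fun β hβ => hnbc' β (Finset.mem_filter.mp hβ).1 (Finset.mem_filter.mp hβ).2
    · rw [Finset.sum_image hinj, ← h']
      exact Finset.sum_congr rfl fun β hβ => by rw [hsnoc β hβ]

end Independence

section Localization

variable {F : Type} [Field F] {n m : ℕ} {c : Fin m → Fin n → F}
  {R : Type} [CommRing R] [Algebra F R] [Algebra (MvPolynomial (Fin n) F) R]
  [IsScalarTower F (MvPolynomial (Fin n) F) R] {zinv : Fin m → R}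

theorem algebraMap_sum_smul_prod_zpoly_pow
    (hzinv : ∀ i, algebraMap _ R (zpoly c i) * zinv i = 1) (p : MvPolynomial (Fin m) F) {N : ℕ}
    (hN : ∀ d ∈ p.support, ∀ i, d i ≤ N) :
    algebraMap _ R (∑ d ∈ p.support, p.coeff d • ∏ i, zpoly c i ^ (N - d i)) =
      aeval zinv p * ∏ i, algebraMap _ R (zpoly c i) ^ N := by
  rw [aeval_def, eval₂_eq', Finset.sum_mul, map_sum]
  refine Finset.sum_congr rfl fun d hd => ?_
  rw [Algebra.smul_def, map_mul, ← IsScalarTower.algebraMap_apply, map_prod, mul_assoc,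
    ← Finset.prod_mul_distrib]
  congr 1
  refine Finset.prod_congr rfl fun i _ => ?_
  set z := algebraMap _ R (zpoly c i)
  calc algebraMap _ R (zpoly c i ^ (N - d i))
      = (z * zinv i) ^ d i * z ^ (N - d i) := by rw [hzinv, one_pow, one_mul, map_pow]
    _ = zinv i ^ d i * (z ^ d i * z ^ (N - d i)) := by ring
    _ = zinv i ^ d i * z ^ N := by rw [← pow_add, Nat.add_sub_cancel' (hN d hd i)]

theorem eq_zero_of_mem_nbcSubmodule [IsLocalization.Away (∏ i, zpoly c i) R] (hc : ∀ i, c i ≠ 0)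
    (hzinv : ∀ i, algebraMap _ R (zpoly c i) * zinv i = 1) {r : MvPolynomial (Fin m) F}
    (hr : r ∈ nbcSubmodule c) (h0 : aeval zinv r = 0) : r = 0 := by
  have hinj : Function.Injective (algebraMap (MvPolynomial (Fin n) F) R) :=
    IsLocalization.injective R (M := .powers (∏ i, zpoly c i))
      (powers_le_nonZeroDivisors_of_noZeroDivisors
        (Finset.prod_ne_zero_iff.mpr fun i _ => zpoly_ne_zero (hc i)))
  have hN : ∀ d ∈ r.support, ∀ i, d i ≤ r.totalDegree :=
    fun d hd i => (monomial_le_degreeOf i hd).trans (degreeOf_le_totalDegree r i)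
  have hsum : ∑ d ∈ r.support, r.coeff d • ∏ i, zpoly c i ^ (r.totalDegree - d i) = 0 :=
    hinj (by rw [algebraMap_sum_smul_prod_zpoly_pow hzinv r hN, h0, zero_mul, map_zero])
  rw [← support_eq_empty, ← Finset.image_eq_empty (f := DFunLike.coe)]
  refine eq_empty_of_sum_smul_prod_zpoly_eq_zero hc (N := r.totalDegree)
    (γ := fun b => r.coeff (Finsupp.equivFunOnFinite.symm b)) ?_ ?_ ?_ ?_
  · simpa only [Finset.forall_mem_image, Finsupp.equivFunOnFinite_symm_coe]
      using fun d hd => mem_support_iff.mp hd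
  · simpa only [Finset.forall_mem_image] using hN
  · simp only [Finset.forall_mem_image]
    intro d hd
    have hsupp : (Finset.univ.filter fun i => d i ≠ 0) = d.support := by
      ext i
      simp
    exact hsupp ▸ hr hd
  · rw [Finset.sum_image DFunLike.coe_injective.injOn]
    simpa using hsum

end Localization

theorem statement2_general
    (F : Type) [Field F] (n m : ℕ)
    (c : Fin m → Fin n → F) (hc : ∀ i, c i ≠ 0)
    (R : Type) [CommRing R] [Algebra F R] [Algebra (MvPolynomial (Fin n) F) R]
    [IsScalarTower F (MvPolynomial (Fin n) F) R]
    [IsLocalization.Away (∏ i, zpoly c i) R]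
    (zinv : Fin m → R)
    (hzinv : ∀ i, algebraMap (MvPolynomial (Fin n) F) R (zpoly c i) * zinv i = 1) :
    RingHom.ker (MvPolynomial.aeval zinv : MvPolynomial (Fin m) F →ₐ[F] R).toRingHom =
      Ideal.span {p : MvPolynomial (Fin m) F | ∃ a : Fin m → F, IsMinRel c a ∧ p = PL a} := by
  have hle : minRelIdeal c ≤ RingHom.ker (aeval zinv : MvPolynomial (Fin m) F →ₐ[F] R).toRingHom :=
    Ideal.span_le.mpr fun _ ⟨a, ha, hp⟩ => hp ▸ aeval_PL_eq_zero hzinv ha.1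
  refine le_antisymm (fun f hf => ?_) hle
  obtain ⟨q, hq, r, hr, rfl⟩ := Submodule.mem_sup.mp (mem_minRelIdeal_sup_nbcSubmodule hc f)
  have hr0 : r = 0 := by
    refine eq_zero_of_mem_nbcSubmodule hc hzinv hr ?_
    have hq0 : aeval zinv q = 0 := hle hq
    have hf0 : aeval zinv (q + r) = 0 := hf
    rwa [map_add, hq0, zero_add] at hf0
  rwa [hr0, add_zero]

/-- The kernel `I` of `h` equals the ideal of `F[t₁,…,t_m]` generated by the
polynomials `P_L`, for `L` a *minimal* linear relation. -/
theorem statement2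
    (F : Type) [Field F] (n m : ℕ) (hn : 0 < n) (hm : 0 < m)
    (c : Fin m → Fin n → F) (hc : ∀ i, c i ≠ 0)
    (R : Type) [CommRing R] [Algebra F R] [Algebra (MvPolynomial (Fin n) F) R]
    [IsScalarTower F (MvPolynomial (Fin n) F) R]
    [IsLocalization.Away (∏ i, zpoly c i) R]
    (zinv : Fin m → R)
    (hzinv : ∀ i, algebraMap (MvPolynomial (Fin n) F) R (zpoly c i) * zinv i = 1) :
    RingHom.ker (MvPolynomial.aeval zinv : MvPolynomial (Fin m) F →ₐ[F] R).toRingHom =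
      Ideal.span {p : MvPolynomial (Fin m) F | ∃ a : Fin m → F, IsMinRel c a ∧ p = PL a} :=
  statement2_general F n m c hc R zinv hzinv
end
end

section
/- The kernel I of h equals the ideal of F[t_1, …, t_m] generated by the polynomials P_L, where L ranges over all linear relations; in other words, the subring of R generated by z_1^{-1}, …, z_m^{-1} is isomorphic to F[t_1, …, t_m]/(P_L : L a linear relation). -/
open scoped TensorProduct
open MvPolynomial

noncomputable section

/-!
The inclusion `⊇` is the identity `∑ aᵢ ∏_{j ≠ i} zⱼ⁻¹ = (∑ aᵢ zᵢ) ∏ⱼ zⱼ⁻¹ = 0`.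

For `⊆` we evaluate in the fraction field `K` of `F[x]` and induct on the set `S` of indices
that may occur. Fix `j ∈ S`. Modulo the relations `tᵢ ≡ β⁻¹ tⱼ` coming from forms `zᵢ = β zⱼ`
parallel to `zⱼ`, a polynomial `f` in `t_S` becomes a polynomial in `tⱼ` whose coefficients only
involve the `tᵢ`, `i ∈ B`, for which `zᵢ` does not vanish on the hyperplane `zⱼ = 0`. If
`f(1/z) = 0` and `f` has degree `N + 1` in `tⱼ`, multiply by `zⱼ^(N+1)`: in the localization of
`F[x]` at `∏_{i ∈ B} zᵢ` the top coefficient `q(1/z)` becomes divisible by `zⱼ`, so restricting to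
`zⱼ = 0` gives `q(1/z') = 0` for the restricted forms `z'ᵢ`. By induction `q` lies in the ideal of
relations of the restriction, and each such relation `L'` lifts: `tⱼ P_{L'} ≡ μ t_{|L'|}` modulo
the relations of `z`. Hence `tⱼ q` may be replaced by a polynomial in `t_B`, which lowers the
`tⱼ`-degree of `f`.
-/

namespace MvPolynomial

variable {R σ : Type*} [CommRing R]

theorem aeval_eq_of_mem_supported {A : Type*} [CommRing A] [Algebra R A] {s : Set σ}
    {v w : σ → A} (h : ∀ i ∈ s, v i = w i) {p : MvPolynomial σ R} (hp : p ∈ supported R s) :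
    aeval v p = aeval w p := by
  have : Set.EqOn (aeval v) (aeval w) (X '' s : Set (MvPolynomial σ R)) := by
    rintro _ ⟨i, hi, rfl⟩
    simp [h i hi]
  exact (AlgHom.eqOn_adjoin_iff.mpr this) hp

theorem exists_mem_supported_sub_mem {J : Ideal (MvPolynomial σ R)} {S T : Set σ}
    (h : ∀ i ∈ S, ∃ g ∈ supported R T, X i - g ∈ J) {f : MvPolynomial σ R}
    (hf : f ∈ supported R S) : ∃ g ∈ supported R T, f - g ∈ J := by
  let π := Ideal.Quotient.mkₐ R J
  suffices supported R S ≤ ((supported R T).map π).comap π by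
    obtain ⟨g, hg, hgf⟩ := this hf
    exact ⟨g, hg, Ideal.Quotient.eq.mp hgf.symm⟩
  refine Algebra.adjoin_le_iff.mpr ?_
  rintro _ ⟨i, hi, rfl⟩
  obtain ⟨g, hg, hXg⟩ := h i hi
  exact ⟨g, hg, (Ideal.Quotient.eq.mpr hXg).symm⟩

theorem exists_aeval_X_eq_of_mem_supported_insert {s : Set σ} {i : σ} {f : MvPolynomial σ R}
    (hf : f ∈ supported R (insert i s)) :
    ∃ P : Polynomial (supported R s), Polynomial.aeval (X i) P = f := by
  rwa [supported_eq_adjoin_X, Set.image_insert_eq, Set.insert_eq, Set.union_comm,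
    Algebra.adjoin_union_eq_adjoin_adjoin, Subalgebra.mem_restrictScalars,
    Algebra.adjoin_singleton_eq_range_aeval] at hf

end MvPolynomial

theorem map_ringInverse {A B G : Type*} [CommRing A] [CommRing B] [FunLike G A B]
    [RingHomClass G A B] (φ : G) {a : A} (ha : IsUnit a) :
    φ (Ring.inverse a) = Ring.inverse (φ a) := by
  obtain ⟨u, rfl⟩ := ha
  simpa using (Ring.inverse_unit (Units.map (φ : A →* B) u)).symm

namespace Polynomial

-- `z ^ N * Q (1 / z)` is the reflection of `Q` evaluated at `z`; its constant term is `Q.coeff N`.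
theorem dvd_coeff_of_eval₂_inv_eq_zero {O K : Type*} [CommRing O] [Field K] {ι : O →+* K}
    (hι : Function.Injective ι) {z : O} (hz : ι z ≠ 0) {Q : Polynomial O} {N : ℕ}
    (hQ : Q.natDegree ≤ N) (h : Q.eval₂ ι (ι z)⁻¹ = 0) : z ∣ Q.coeff N := by
  let _ : Invertible (ι z)⁻¹ := invertibleOfNonzero (inv_ne_zero hz)
  have hrefl : (reflect N Q).eval z = 0 := by
    refine hι ?_
    rw [← eval₂_at_apply, map_zero, ← (eval₂_reflect_eq_zero_iff ι (ι z)⁻¹ N Q hQ).mpr h,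
      invOf_eq_inv, inv_inv]
  have := sub_dvd_eval_sub z 0 (reflect N Q)
  rwa [sub_zero, hrefl, ← coeff_zero_eq_eval_zero, coeff_reflect, revAt_zero, zero_sub,
    dvd_neg] at this

theorem aeval_mem_of_reduce_degree {A R T : Type*} [CommRing A] [CommRing R] [CommRing T]
    [Algebra A R] {x : R} {J : Ideal R} {φ : R →+* T} (hJ : J ≤ RingHom.ker φ)
    (hbase : ∀ a : A, φ (algebraMap A R a) = 0 → algebraMap A R a ∈ J)
    (hstep : ∀ (P : Polynomial A) (N : ℕ), P.natDegree ≤ N + 1 → φ (aeval x P) = 0 →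
      ∃ b : A, x * algebraMap A R (P.coeff (N + 1)) - algebraMap A R b ∈ J)
    (P : Polynomial A) (hP : φ (aeval x P) = 0) : aeval x P ∈ J := by
  suffices ∀ N (P : Polynomial A), P.natDegree ≤ N → φ (aeval x P) = 0 → aeval x P ∈ J from
    this _ P le_rfl hP
  intro N
  induction N with
  | zero =>
    intro P hP h0
    rw [eq_C_of_natDegree_le_zero hP, aeval_C] at h0 ⊢
    exact hbase _ h0
  | succ N ih =>
    intro P hP h0
    obtain ⟨b, hb⟩ := hstep P N hP h0
    set P' := P - C (P.coeff (N + 1)) * X ^ (N + 1) + C b * X ^ N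
    have hdiff : aeval x P - aeval x P' ∈ J := by
      convert J.mul_mem_left (x ^ N) hb using 1
      simp only [P', map_add, map_sub, map_mul, aeval_C, aeval_X_pow]
      ring
    have hP' : P'.natDegree ≤ N := by
      refine natDegree_le_iff_coeff_eq_zero.mpr fun j hj => ?_
      simp only [P', coeff_add, coeff_sub, coeff_C_mul_X_pow, if_neg hj.ne']
      rcases (Nat.succ_le_of_lt hj).eq_or_lt with rfl | hj'
      · simp
      · simp [hj'.ne', coeff_eq_zero_of_natDegree_lt (hP.trans_lt hj')]
    have h0' : φ (aeval x P') = 0 := by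
      simpa [h0] using hJ hdiff
    simpa using add_mem hdiff (ih P' hP' h0')

end Polynomial

-- Multiplying `f = ∑ Pₖ tⱼᵏ` by `z ^ N` at `tⱼ = 1/z` and then sending `z` to `0` via `ρ`
-- leaves only the top coefficient.
theorem MvPolynomial.aeval_coeff_eq_zero_of_specialization {R σ O K K' : Type*} [CommRing R]
    [CommRing O] [Field K] [CommRing K'] [Algebra R O] [Algebra R K] [Algebra R K']
    {ι : O →ₐ[R] K} (hι : Function.Injective ι) {ρ : O →ₐ[R] K'} {B : Set σ} {v : σ → O}
    {u : σ → K} {u' : σ → K'} (hιv : ∀ i ∈ B, ι (v i) = u i) (hρv : ∀ i ∈ B, ρ (v i) = u' i)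
    {z : O} (hz : ι z ≠ 0) (hρz : ρ z = 0) {j : σ} (hj : u j = (ι z)⁻¹)
    {P : Polynomial (supported R B)} {N : ℕ} (hP : P.natDegree ≤ N)
    (h : aeval u (Polynomial.aeval (X j : MvPolynomial σ R) P) = 0) :
    aeval u' (P.coeff N : MvPolynomial σ R) = 0 := by
  let ev : MvPolynomial σ R →+* O := (aeval v : MvPolynomial σ R →ₐ[R] O)
  let evK : MvPolynomial σ R →+* K := (aeval u : MvPolynomial σ R →ₐ[R] K)
  have hQ : (P.map (ev.comp (algebraMap (supported R B) _))).eval₂ ι (ι z)⁻¹ = 0 := by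
    calc _ = P.eval₂ (evK.comp (algebraMap (supported R B) _)) (evK (X j)) := by
          rw [Polynomial.eval₂_map]
          congr 1
          · ext q
            exact (comp_aeval_apply _ ι _).trans (aeval_eq_of_mem_supported hιv q.2)
          · simp [evK, hj]
      _ = 0 := by rw [← Polynomial.hom_eval₂, ← Polynomial.aeval_def]; exact h
  obtain ⟨w, hw⟩ := Polynomial.dvd_coeff_of_eval₂_inv_eq_zero hι hz
    (Polynomial.natDegree_map_le.trans hP) hQ
  rw [Polynomial.coeff_map] at hw
  have hρ : ρ (aeval v (P.coeff N : MvPolynomial σ R)) = 0 := by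
    rw [show aeval v (P.coeff N : MvPolynomial σ R) = z * w from hw, map_mul, hρz, zero_mul]
  rwa [comp_aeval_apply, aeval_eq_of_mem_supported hρv (P.coeff N).2] at hρ

namespace OrlikTerao

open Finset

variable {F : Type} [Field F] {n m : ℕ}

def linForm : (Fin n → F) →ₗ[F] MvPolynomial (Fin n) F := Fintype.linearCombination F X

theorem linForm_injective : Function.Injective (linForm : (Fin n → F) → MvPolynomial (Fin n) F) :=
  (MvPolynomial.linearIndependent_X (R := F) (σ := Fin n)).fintypeLinearCombination_injective

theorem linForm_single (j : Fin n) : linForm (Pi.single j 1 : Fin n → F) = X j := by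
  simp [linForm]

theorem zpoly_eq_linForm (c : Fin m → Fin n → F) (i : Fin m) : zpoly c i = linForm (c i) := by
  simp [zpoly, linForm, Fintype.linearCombination_apply, C_mul']

theorem zpoly_ne_zero {c : Fin m → Fin n → F} {i : Fin m} (h : c i ≠ 0) : zpoly c i ≠ 0 := by
  rwa [zpoly_eq_linForm, ← map_zero linForm, linForm_injective.ne_iff]

/-- For `w k ≠ 0`, the coefficients of the restriction of the form `v` to the hyperplane `w = 0`,
written in the coordinates other than `x_k`. -/
def restrictForm (w : Fin n → F) (k : Fin n) : (Fin n → F) →ₗ[F] Fin n → F :=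
  LinearMap.id - (LinearMap.proj k).smulRight ((w k)⁻¹ • w)

theorem restrictForm_apply (w : Fin n → F) (k : Fin n) (v : Fin n → F) :
    restrictForm w k v = v - (v k / w k) • w := by
  simp [restrictForm, smul_smul, div_eq_mul_inv]

theorem restrictForm_self {w : Fin n → F} {k : Fin n} (hk : w k ≠ 0) : restrictForm w k w = 0 := by
  rw [restrictForm_apply, div_self hk, one_smul, sub_self]

def restrictHom (w : Fin n → F) (k : Fin n) : MvPolynomial (Fin n) F →ₐ[F] MvPolynomial (Fin n) F :=
  aeval fun j => linForm (restrictForm w k (Pi.single j 1))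

theorem restrictHom_linForm (w : Fin n → F) (k : Fin n) (v : Fin n → F) :
    restrictHom w k (linForm v) = linForm (restrictForm w k v) := by
  suffices (restrictHom w k).toLinearMap ∘ₗ linForm = linForm ∘ₗ restrictForm w k from
    LinearMap.congr_fun this v
  ext j
  simp [linForm_single, restrictHom]

theorem mem_lsupp {a : Fin m → F} {i : Fin m} : i ∈ lsupp a ↔ a i ≠ 0 := by
  simp [lsupp]

theorem isLinRel_iff {c : Fin m → Fin n → F} {a : Fin m → F} :
    IsLinRel c a ↔ 2 ≤ #(lsupp a) ∧ ∑ i, a i • c i = 0 := by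
  have hsum : ∑ i ∈ lsupp a, C (a i) * zpoly c i = linForm (∑ i, a i • c i) := by
    rw [← sum_subset (subset_univ (lsupp a)) fun i _ hi => by
      rw [mem_lsupp, not_not] at hi; rw [hi, zero_smul]]
    simp [zpoly_eq_linForm, C_mul']
  rw [IsLinRel, hsum, ← map_zero linForm, linForm_injective.eq_iff]

/-- `Ring.inverse` gives the junk value `0` where `zᵢ` is not a unit. -/
def recip (A : Type*) [CommRing A] [Algebra (MvPolynomial (Fin n) F) A] (c : Fin m → Fin n → F)
    (i : Fin m) : A :=
  Ring.inverse (algebraMap (MvPolynomial (Fin n) F) A (zpoly c i))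

theorem algebraMap_mul_recip {A : Type*} [CommRing A] [Algebra (MvPolynomial (Fin n) F) A]
    {c : Fin m → Fin n → F} {i : Fin m} (h : IsUnit (algebraMap _ A (zpoly c i))) :
    algebraMap _ A (zpoly c i) * recip A c i = 1 :=
  Ring.mul_inverse_cancel _ h

theorem isUnit_algebraMap_zpoly {c : Fin m → Fin n → F} {i : Fin m} (h : c i ≠ 0) :
    IsUnit (algebraMap _ (FractionRing (MvPolynomial (Fin n) F)) (zpoly c i)) :=
  isUnit_iff_ne_zero.mpr (IsFractionRing.to_map_eq_zero_iff.not.mpr (zpoly_ne_zero h))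

theorem tMon_mem_supported (M : Finset (Fin m)) : tMon M ∈ supported F (M : Set (Fin m)) :=
  prod_mem fun _ hi => (X_mem_supported (R := F)).mpr hi

theorem PL_mem_supported (a : Fin m → F) : PL a ∈ supported F (lsupp a : Set (Fin m)) :=
  sum_mem fun _ _ => mul_mem (algebraMap_mem _ _) <|
    supported_mono (by simp) (tMon_mem_supported _)

theorem aeval_recip_PL_eq_zero (A : Type*) [CommRing A] [Algebra F A]
    [Algebra (MvPolynomial (Fin n) F) A] [IsScalarTower F (MvPolynomial (Fin n) F) A]
    {c : Fin m → Fin n → F} {a : Fin m → F} (ha : IsLinRel c a)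
    (hu : ∀ i ∈ lsupp a, IsUnit (algebraMap _ A (zpoly c i))) :
    aeval (recip A c) (PL a) = 0 := by
  set Z := algebraMap (MvPolynomial (Fin n) F) A
  have hprod : ∀ i ∈ lsupp a, ∏ j ∈ lsupp a \ {i}, recip A c j
      = Z (zpoly c i) * ∏ j ∈ lsupp a, recip A c j := fun i hi => by
    rw [sdiff_singleton_eq_erase, ← mul_prod_erase _ _ hi, ← mul_assoc,
      algebraMap_mul_recip (hu i hi), one_mul]
  calc aeval (recip A c) (PL a)
      = ∑ i ∈ lsupp a, Z (C (a i)) * ∏ j ∈ lsupp a \ {i}, recip A c j := by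
        simp [PL, tMon, IsScalarTower.algebraMap_apply F (MvPolynomial (Fin n) F) A, Z]
    _ = Z (∑ i ∈ lsupp a, C (a i) * zpoly c i) * ∏ j ∈ lsupp a, recip A c j := by
        rw [map_sum, sum_mul]
        exact sum_congr rfl fun i hi => by rw [hprod i hi, map_mul, mul_assoc]
    _ = 0 := by rw [ha.2, map_zero, zero_mul]

def relIdeal (c : Fin m → Fin n → F) (S : Finset (Fin m)) : Ideal (MvPolynomial (Fin m) F) :=
  Ideal.span {p | ∃ a, IsLinRel c a ∧ lsupp a ⊆ S ∧ p = PL a}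

theorem PL_mem_relIdeal {c : Fin m → Fin n → F} {a : Fin m → F} {S : Finset (Fin m)}
    (ha : IsLinRel c a) (hS : lsupp a ⊆ S) : PL a ∈ relIdeal c S :=
  Ideal.subset_span ⟨a, ha, hS, rfl⟩

theorem relIdeal_mono (c : Fin m → Fin n → F) {S T : Finset (Fin m)} (h : S ⊆ T) :
    relIdeal c S ≤ relIdeal c T :=
  Ideal.span_mono fun _ ⟨a, ha, hS, hp⟩ => ⟨a, ha, hS.trans h, hp⟩

theorem relIdeal_le_ker (A : Type*) [CommRing A] [Algebra F A]
    [Algebra (MvPolynomial (Fin n) F) A] [IsScalarTower F (MvPolynomial (Fin n) F) A]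
    {c : Fin m → Fin n → F} {S : Finset (Fin m)}
    (hu : ∀ i ∈ S, IsUnit (algebraMap _ A (zpoly c i))) :
    relIdeal c S ≤ RingHom.ker (aeval (recip A c)) :=
  Ideal.span_le.mpr fun _ ⟨_, ha, hS, hp⟩ =>
    hp ▸ aeval_recip_PL_eq_zero A ha fun i hi => hu i (hS hi)

theorem lsupp_add_single {a : Fin m → F} {j : Fin m} (hj : a j = 0) {ν : F} (hν : ν ≠ 0) :
    lsupp (a + Pi.single j ν) = insert j (lsupp a) := by
  ext i
  rcases eq_or_ne i j with rfl | hij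
  · simp [mem_lsupp, hj, hν]
  · simp [mem_lsupp, hij]

theorem PL_add_single {a : Fin m → F} {j : Fin m} (hj : a j = 0) {ν : F} (hν : ν ≠ 0) :
    PL (a + Pi.single j ν) = X j * PL a + C ν * tMon (lsupp a) := by
  have hjL : j ∉ lsupp a := fun h => mem_lsupp.mp h hj
  rw [PL, lsupp_add_single hj hν, sum_insert hjL, insert_sdiff_of_mem _ (mem_singleton_self j),
    sdiff_singleton_eq_erase, erase_eq_of_notMem hjL, PL, mul_sum, add_comm]
  congr 1
  · refine sum_congr rfl fun i hi => ?_
    have hij : i ≠ j := fun h => hjL (h ▸ hi)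
    rw [insert_sdiff_of_notMem _ (by simpa using hij.symm), tMon, prod_insert (by simp [hjL]),
      Pi.add_apply, Pi.single_eq_of_ne hij, add_zero, tMon]
    ring
  · simp [hj]

-- `∑ aᵢ c'ᵢ = 0` says `∑ aᵢ cᵢ = μ • c j`, so `a` (if `μ = 0`) or `a - μ eⱼ` is a relation of `c`.
theorem exists_X_mul_PL_sub_mem_relIdeal {c c' : Fin m → Fin n → F} {β : Fin m → F} {j : Fin m}
    (hc' : ∀ i, c' i = c i - β i • c j) {a : Fin m → F} (ha : IsLinRel c' a) (hj : j ∉ lsupp a)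
    {S : Finset (Fin m)} (hS : insert j (lsupp a) ⊆ S) :
    ∃ h ∈ supported F (lsupp a : Set (Fin m)), X j * PL a - h ∈ relIdeal c S := by
  replace hj : a j = 0 := by simpa [mem_lsupp] using hj
  obtain ⟨hcard, hsum⟩ := isLinRel_iff.mp ha
  set μ := ∑ i, a i * β i
  have hrel : ∑ i, a i • c i = μ • c j := by
    simp only [hc', smul_sub, sum_sub_distrib, smul_smul, sub_eq_zero] at hsum
    rw [hsum, sum_smul]
  by_cases hμ : μ = 0
  · refine ⟨0, zero_mem _, ?_⟩
    rw [sub_zero]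
    refine Ideal.mul_mem_left _ _ (PL_mem_relIdeal ?_ ((subset_insert _ _).trans hS))
    exact isLinRel_iff.mpr ⟨hcard, by rw [hrel, hμ, zero_smul]⟩
  · refine ⟨C μ * tMon (lsupp a), mul_mem (algebraMap_mem _ μ) (tMon_mem_supported _), ?_⟩
    have hPL := PL_add_single hj (neg_ne_zero.mpr hμ)
    rw [map_neg, neg_mul, ← sub_eq_add_neg] at hPL
    rw [← hPL]
    refine PL_mem_relIdeal (isLinRel_iff.mpr ⟨?_, ?_⟩) ?_
    · rw [lsupp_add_single hj (neg_ne_zero.mpr hμ)]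
      exact hcard.trans (card_le_card (subset_insert _ _))
    · simp [add_smul, sum_add_distrib, hrel]
    · rwa [lsupp_add_single hj (neg_ne_zero.mpr hμ)]

theorem X_sub_C_mul_X_mem_relIdeal {c : Fin m → Fin n → F} {i j : Fin m} (hij : i ≠ j) {β : F}
    (hβ : β ≠ 0) (h : c i = β • c j) {S : Finset (Fin m)} (hi : i ∈ S) (hj : j ∈ S) :
    X i - C β⁻¹ * X j ∈ relIdeal c S := by
  have hi0 : (Pi.single i (-1) : Fin m → F) j = 0 := Pi.single_eq_of_ne hij.symm _
  have hsupp : lsupp (Pi.single i (-1) : Fin m → F) = {i} := by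
    ext l; rcases eq_or_ne l i with rfl | hl <;> simp [mem_lsupp, *]
  have hPL0 : PL (Pi.single i (-1) : Fin m → F) = -1 := by simp [PL, hsupp, tMon]
  have hPL := PL_add_single hi0 hβ
  rw [hPL0, hsupp, tMon, prod_singleton] at hPL
  have hrel : IsLinRel c (Pi.single i (-1) + Pi.single j β) := by
    refine isLinRel_iff.mpr ⟨?_, ?_⟩
    · rw [lsupp_add_single hi0 hβ, hsupp, card_pair hij.symm]
    · simp [add_smul, sum_add_distrib, h]
  have hmem := Ideal.mul_mem_left _ (C β⁻¹) (PL_mem_relIdeal (S := S) hrel (by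
    rw [lsupp_add_single hi0 hβ, hsupp]; exact insert_subset hj (singleton_subset_iff.mpr hi)))
  convert hmem using 1
  have hCβ : C β⁻¹ * C β = (1 : MvPolynomial (Fin m) F) := by
    rw [← map_mul, inv_mul_cancel₀ hβ, map_one]
  rw [hPL]
  linear_combination (-X i) * hCβ

theorem exists_mem_supported_insert_sub_mem_relIdeal {c : Fin m → Fin n → F}
    {S B : Finset (Fin m)} {j : Fin m} {k : Fin n} (hc : ∀ i ∈ S, c i ≠ 0) (hj : j ∈ S)
    (hB : ∀ i ∈ S, i ∉ insert j B → restrictForm (c j) k (c i) = 0) {f : MvPolynomial (Fin m) F}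
    (hf : f ∈ supported F (S : Set (Fin m))) :
    ∃ f₁ ∈ supported F (insert j B : Set (Fin m)), f - f₁ ∈ relIdeal c S := by
  classical
  refine exists_mem_supported_sub_mem (fun i hi => ?_) hf
  by_cases hiB : i ∈ insert j B
  · exact ⟨X i, (X_mem_supported (R := F)).mpr (by simpa using hiB), by simp⟩
  have hij : i ≠ j := fun h => hiB (h ▸ mem_insert_self i B)
  have hci : c i = (c i k / c j k) • c j := by
    rw [← sub_eq_zero, ← restrictForm_apply, hB i hi hiB]
  have hβ : c i k / c j k ≠ 0 := fun h => hc i hi (by rw [hci, h, zero_smul])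
  exact ⟨C (c i k / c j k)⁻¹ * X j, mul_mem (algebraMap_mem _ _)
    ((X_mem_supported (R := F)).mpr (Set.mem_insert j _)),
    X_sub_C_mul_X_mem_relIdeal hij hβ hci hi hj⟩

theorem exists_X_mul_sub_mem_relIdeal {c c' : Fin m → Fin n → F} {β : Fin m → F} {j : Fin m}
    (hc' : ∀ i, c' i = c i - β i • c j) {B S : Finset (Fin m)} (hjB : j ∉ B)
    (hBS : insert j B ⊆ S) {q : MvPolynomial (Fin m) F} (hq : q ∈ relIdeal c' B)
    (hqB : q ∈ supported F (B : Set (Fin m))) :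
    ∃ h ∈ supported F (B : Set (Fin m)), X j * q - h ∈ relIdeal c S := by
  classical
  -- `κ` kills the variables outside `B`; it keeps the coefficients of the span induction in `t_B`.
  let κ : MvPolynomial (Fin m) F →ₐ[F] MvPolynomial (Fin m) F :=
    aeval fun i => if i ∈ B then X i else 0
  have hκ_mem : ∀ p, κ p ∈ supported F (B : Set (Fin m)) := by
    intro p
    induction p using MvPolynomial.induction_on with
    | C a => rw [aeval_C]; exact algebraMap_mem _ a
    | add p q hp hq => simpa using add_mem hp hq
    | mul_X p i hp =>
      rw [map_mul]
      refine mul_mem hp ?_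
      simp only [κ, aeval_X]
      split_ifs with hi
      · exact (X_mem_supported (R := F)).mpr hi
      · exact zero_mem _
  have hκ_id : ∀ p ∈ supported F (B : Set (Fin m)), κ p = p := fun p hp =>
    (aeval_eq_of_mem_supported (fun i hi => if_pos hi) hp).trans (aeval_X_left_apply p)
  suffices ∀ p ∈ relIdeal c' B, ∃ h ∈ supported F (B : Set (Fin m)), X j * κ p - h ∈ relIdeal c S by
    simpa only [hκ_id q hqB] using this q hq
  intro p hp
  induction hp using Submodule.span_induction with
  | mem p hp =>
    obtain ⟨a, ha, haB, rfl⟩ := hp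
    have hsupp : supported F (lsupp a : Set (Fin m)) ≤ supported F (B : Set (Fin m)) :=
      supported_mono (by exact_mod_cast haB)
    obtain ⟨h, hh, hmem⟩ := exists_X_mul_PL_sub_mem_relIdeal hc' ha (fun h => hjB (haB h))
      ((insert_subset_insert j haB).trans hBS)
    exact ⟨h, hsupp hh, by rwa [hκ_id _ (hsupp (PL_mem_supported a))]⟩
  | zero => exact ⟨0, zero_mem _, by simp⟩
  | add x y _ _ hx hy =>
    obtain ⟨h₁, hh₁, hx⟩ := hx
    obtain ⟨h₂, hh₂, hy⟩ := hy
    refine ⟨h₁ + h₂, add_mem hh₁ hh₂, ?_⟩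
    convert add_mem hx hy using 1
    rw [map_add]; ring
  | smul r x _ hx =>
    obtain ⟨h, hh, hx⟩ := hx
    refine ⟨κ r * h, mul_mem (hκ_mem r) hh, ?_⟩
    convert Ideal.mul_mem_left _ (κ r) hx using 1
    rw [smul_eq_mul, map_mul]; ring

theorem aeval_recip_coeff_eq_zero {c : Fin m → Fin n → F} {j : Fin m} {k : Fin n}
    (hk : c j k ≠ 0) {B : Finset (Fin m)} (hB : ∀ i ∈ B, restrictForm (c j) k (c i) ≠ 0)
    {P : Polynomial (supported F (B : Set (Fin m)))} {N : ℕ} (hP : P.natDegree ≤ N)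
    (h : aeval (recip (FractionRing (MvPolynomial (Fin n) F)) c)
      (Polynomial.aeval (X j : MvPolynomial (Fin m) F) P) = 0) :
    aeval (recip (FractionRing (MvPolynomial (Fin n) F)) fun i => restrictForm (c j) k (c i))
      (P.coeff N : MvPolynomial (Fin m) F) = 0 := by
  set c' := fun i => restrictForm (c j) k (c i)
  set K := FractionRing (MvPolynomial (Fin n) F)
  set Z := ∏ i ∈ B, zpoly c i
  let O := Localization.Away Z
  have hσ : ∀ i, restrictHom (c j) k (zpoly c i) = zpoly c' i := fun i => by
    rw [zpoly_eq_linForm, restrictHom_linForm, zpoly_eq_linForm]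
  have hZ : Z ≠ 0 := prod_ne_zero_iff.mpr fun i hi =>
    zpoly_ne_zero fun h => hB i hi (by rw [h, map_zero])
  let toK := IsScalarTower.toAlgHom F (MvPolynomial (Fin n) F) K
  have hιZ : IsUnit (toK Z) := isUnit_iff_ne_zero.mpr (IsFractionRing.to_map_eq_zero_iff.not.mpr hZ)
  have hρZ : IsUnit (toK.comp (restrictHom (c j) k) Z) := by
    simpa [Z, toK, map_prod, hσ] using fun i (hi : i ∈ B) => isUnit_algebraMap_zpoly (hB i hi)
  -- `ι` is the inclusion of `O = F[x][1/∏_{i ∈ B} zᵢ]` in `K` and `ρ` restricts to `zⱼ = 0`.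
  let ι : O →ₐ[F] K := IsLocalization.Away.liftAlgHom Z hιZ
  let ρ : O →ₐ[F] K := IsLocalization.Away.liftAlgHom Z hρZ
  have hιalg : ∀ p, ι (algebraMap _ O p) = algebraMap _ K p :=
    IsLocalization.Away.lift_eq (S := O) Z hιZ
  have hρalg : ∀ p, ρ (algebraMap _ O p) = algebraMap _ K (restrictHom (c j) k p) :=
    IsLocalization.Away.lift_eq (S := O) Z hρZ
  have hι : Function.Injective ι := by
    refine (IsLocalization.lift_injective_iff _).mpr fun p q => ?_
    rw [(IsLocalization.injective O (powers_le_nonZeroDivisors_of_noZeroDivisors hZ)).eq_iff]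
    exact (IsFractionRing.injective _ K).eq_iff.symm
  have hunit : ∀ i ∈ B, IsUnit (algebraMap _ O (zpoly c i)) := fun i hi =>
    IsLocalization.Away.isUnit_of_dvd Z (dvd_prod_of_mem _ hi)
  refine aeval_coeff_eq_zero_of_specialization hι (v := recip O c)
    (fun i hi => by rw [recip, map_ringInverse ι (hunit i hi), hιalg, recip])
    (fun i hi => by rw [recip, map_ringInverse ρ (hunit i hi), hρalg, hσ, recip])
    (z := algebraMap _ O (zpoly c j)) ?_ ?_ ?_ hP h
  · rw [hιalg]
    exact IsFractionRing.to_map_eq_zero_iff.not.mpr (zpoly_ne_zero fun h => hk (by simp [h]))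
  · rw [hρalg, hσ, zpoly_eq_linForm]
    simp [c', restrictForm_self hk]
  · rw [hιalg, recip, Ring.inverse_eq_inv]

theorem mem_relIdeal_of_aeval_recip_eq_zero (S : Finset (Fin m)) (c : Fin m → Fin n → F)
    (hc : ∀ i ∈ S, c i ≠ 0) {f : MvPolynomial (Fin m) F}
    (hfS : f ∈ supported F (S : Set (Fin m)))
    (hf : aeval (recip (FractionRing (MvPolynomial (Fin n) F)) c) f = 0) : f ∈ relIdeal c S := by
  classical
  induction S using Finset.strongInduction generalizing c f with
  | H S ih =>
  rcases S.eq_empty_or_nonempty with rfl | ⟨j, hj⟩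
  · rw [coe_empty, supported_empty, Algebra.mem_bot] at hfS
    obtain ⟨a, rfl⟩ := hfS
    rw [AlgHom.commutes, FaithfulSMul.algebraMap_eq_zero_iff] at hf
    simp [hf]
  obtain ⟨k, hk⟩ : ∃ k, c j k ≠ 0 := Function.ne_iff.mp (hc j hj)
  set c' := fun i => restrictForm (c j) k (c i)
  set B := (S.erase j).filter fun i => c' i ≠ 0
  have hBS : B ⊂ S := (filter_subset _ _).trans_ssubset (erase_ssubset hj)
  have hjB : j ∉ B := fun h => (mem_erase.mp (mem_filter.mp h).1).1 rfl
  have hc'B : ∀ i ∈ B, c' i ≠ 0 := fun i hi => (mem_filter.mp hi).2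
  have hpar : ∀ i ∈ S, i ∉ insert j B → c' i = 0 := fun i hi hiB => by
    simp only [B, mem_insert, mem_filter, mem_erase, not_or, not_and, not_not] at hiB
    exact hiB.2 ⟨hiB.1, hi⟩
  have hJ := relIdeal_le_ker _ fun i hi => isUnit_algebraMap_zpoly (hc i hi)
  obtain ⟨f₁, hf₁, hff₁⟩ := exists_mem_supported_insert_sub_mem_relIdeal hc hj hpar hfS
  obtain ⟨P, rfl⟩ := exists_aeval_X_eq_of_mem_supported_insert (by simpa using hf₁)
  have hP : aeval (recip (FractionRing (MvPolynomial (Fin n) F)) c)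
      (Polynomial.aeval (X j : MvPolynomial (Fin m) F) P) = 0 := by
    simpa [hf] using hJ hff₁
  suffices Polynomial.aeval (X j) P ∈ relIdeal c S by simpa using add_mem hff₁ this
  refine Polynomial.aeval_mem_of_reduce_degree hJ (fun q hq => ?_) (fun P N hPN hP0 => ?_) P hP
  · exact relIdeal_mono c hBS.subset (ih B hBS c (fun i hi => hc i (hBS.subset hi)) q.2 hq)
  obtain ⟨h, hh, hmem⟩ := exists_X_mul_sub_mem_relIdeal (fun i => restrictForm_apply (c j) k (c i))
    hjB (insert_subset hj hBS.subset) (ih B hBS c' hc'B (P.coeff (N + 1)).2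
      (aeval_recip_coeff_eq_zero hk hc'B hPN hP0)) (P.coeff (N + 1)).2
  exact ⟨⟨h, hh⟩, hmem⟩

theorem aeval_recip_fractionRing_eq_zero {c : Fin m → Fin n → F} (hc : ∀ i, c i ≠ 0)
    {R : Type*} [CommRing R] [Algebra F R] [Algebra (MvPolynomial (Fin n) F) R]
    [IsScalarTower F (MvPolynomial (Fin n) F) R] [IsLocalization.Away (∏ i, zpoly c i) R]
    {f : MvPolynomial (Fin m) F} (hf : aeval (recip R c) f = 0) :
    aeval (recip (FractionRing (MvPolynomial (Fin n) F)) c) f = 0 := by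
  set K := FractionRing (MvPolynomial (Fin n) F)
  have hZ : IsUnit (IsScalarTower.toAlgHom F (MvPolynomial (Fin n) F) K (∏ i, zpoly c i)) := by
    rw [map_prod]
    exact IsUnit.prod_univ_iff.mpr fun i => isUnit_algebraMap_zpoly (hc i)
  let ψ : R →ₐ[F] K := IsLocalization.Away.liftAlgHom _ hZ
  have hψ : ∀ i, ψ (recip R c i) = recip K c i := fun i => by
    have hunit := IsLocalization.Away.isUnit_of_dvd (S := R) (∏ i, zpoly c i)
      (dvd_prod_of_mem (zpoly c) (mem_univ i))
    rw [recip, map_ringInverse ψ hunit, recip]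
    exact congrArg Ring.inverse (IsLocalization.Away.lift_eq (S := R) _ hZ _)
  rw [← funext hψ, ← comp_aeval_apply, hf, map_zero]

end OrlikTerao

theorem statement3_general
    (F : Type) [Field F] (n m : ℕ)
    (c : Fin m → Fin n → F) (hc : ∀ i, c i ≠ 0)
    (R : Type) [CommRing R] [Algebra F R] [Algebra (MvPolynomial (Fin n) F) R]
    [IsScalarTower F (MvPolynomial (Fin n) F) R]
    [IsLocalization.Away (∏ i, zpoly c i) R]
    (zinv : Fin m → R)
    (hzinv : ∀ i, algebraMap (MvPolynomial (Fin n) F) R (zpoly c i) * zinv i = 1) :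
    RingHom.ker (MvPolynomial.aeval zinv : MvPolynomial (Fin m) F →ₐ[F] R).toRingHom =
      Ideal.span {p : MvPolynomial (Fin m) F | ∃ a : Fin m → F, IsLinRel c a ∧ p = PL a} := by
  open OrlikTerao in
  have hunit : ∀ i, IsUnit (algebraMap _ R (zpoly c i)) := fun i => IsUnit.of_mul_eq_one _ (hzinv i)
  obtain rfl : zinv = recip R c := funext fun i => by
    simpa [recip, hzinv i] using (Ring.inverse_mul_cancel_left _ (zinv i) (hunit i)).symm
  have hspan : Ideal.span {p | ∃ a, IsLinRel c a ∧ p = PL a} = relIdeal c Finset.univ := by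
    simp [relIdeal]
  rw [hspan]
  refine le_antisymm (fun f hf => ?_) (relIdeal_le_ker R fun i _ => hunit i)
  exact mem_relIdeal_of_aeval_recip_eq_zero Finset.univ c (fun i _ => hc i) (by simp)
    (aeval_recip_fractionRing_eq_zero hc hf)

/-- The kernel `I` of `h` equals the ideal of `F[t₁,…,t_m]` generated by the
polynomials `P_L`, where `L` ranges over all linear relations. -/
theorem statement3
    (F : Type) [Field F] (n m : ℕ) (hn : 0 < n) (hm : 0 < m)
    (c : Fin m → Fin n → F) (hc : ∀ i, c i ≠ 0)
    (R : Type) [CommRing R] [Algebra F R] [Algebra (MvPolynomial (Fin n) F) R]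
    [IsScalarTower F (MvPolynomial (Fin n) F) R]
    [IsLocalization.Away (∏ i, zpoly c i) R]
    (zinv : Fin m → R)
    (hzinv : ∀ i, algebraMap (MvPolynomial (Fin n) F) R (zpoly c i) * zinv i = 1) :
    RingHom.ker (MvPolynomial.aeval zinv : MvPolynomial (Fin m) F →ₐ[F] R).toRingHom =
      Ideal.span {p : MvPolynomial (Fin m) F | ∃ a : Fin m → F, IsLinRel c a ∧ p = PL a} :=
  statement3_general F n m c hc R zinv hzinv
end
end

section
/- For every linear relation L and every subset S ⊆ |L|, the element Q_{L,S} lies in the ideal of Ξ generated by the elements P_{L,T} with T ranging over all subsets of |L|. -/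
/-!
For `j ∈ |L| ∖ S` one has `Q_{L,S} = u_j P_{L,S} - (-1)^{#{x ∈ S | x < j}} t_j P_{L,S∪{j}}`.
The bracket of `P_{L,S}` at the index `i` is the expansion of `∏_{k ∈ S} (u_k - u_i)`, since every
term containing `u_i` twice vanishes. Moving the factor `u_j - u_i` of `∏_{k ∈ S∪{j}} (u_k - u_i)`
to the front costs exactly the sign above, and `u_i ∏_{k ∈ S} (u_k - u_i) = u_i u_S` because
`u_i² = 0`; so the two sides agree term by term.
-/

open scoped TensorProduct
open MvPolynomial

noncomputable section

/-- `Q_{L,S} = Σ_{i∈|L|∖S} a_i · (−1)^{#{j∈S : j<i}} · t_{|L|∖(S∪{i})} · u_{S∪{i}}`. -/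
def QLS {F : Type} [Field F] {m : ℕ} (a : Fin m → F) (S : Finset (Fin m)) : XiAlg F m :=
  ∑ i ∈ lsupp a \ S,
    (C ((-1 : F) ^ (@Finset.filter _ (fun j => j < i) (Classical.decPred _) S).card * a i) *
        tMon (lsupp a \ insert i S)) ⊗ₜ[F] uM (insert i S)

namespace ExteriorAlgebra

variable {R M κ : Type*} [CommRing R] [AddCommGroup M] [Module R M]

theorem ι_mul_ι_comm (x y : M) : ι R x * ι R y = -(ι R y * ι R x) :=
  eq_neg_of_add_eq_zero_left (ι_add_mul_swap x y)

theorem prod_map_ι_append_cons (f : κ → M) (A B : List κ) (x : κ) :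
    ((A ++ x :: B).map fun k => ι R (f k)).prod =
      (-1 : R) ^ A.length • (ι R (f x) * ((A ++ B).map fun k => ι R (f k)).prod) := by
  induction A with
  | nil => simp
  | cons y A ih =>
    simp only [List.cons_append, List.map_cons, List.prod_cons, ih, List.length_cons,
      mul_smul_comm, ← mul_assoc, ι_mul_ι_comm (f y) (f x), neg_mul, smul_neg, pow_succ,
      mul_neg_one, neg_smul]

theorem ι_mul_prod_map_ι_sub (f : κ → M) (w : M) (l : List κ) :
    ι R w * (l.map fun k => ι R (f k - w)).prod = ι R w * (l.map fun k => ι R (f k)).prod := by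
  induction l with
  | nil => rfl
  | cons y t ih =>
    simp only [List.map_cons, List.prod_cons]
    rw [map_sub, ← mul_assoc, ← mul_assoc, mul_sub, ι_sq_zero, sub_zero, ι_mul_ι_comm, neg_mul,
      neg_mul, mul_assoc, mul_assoc, ih]

theorem prod_map_ι_sub (f : κ → M) (i : κ) (l : List κ) :
    (l.map fun k => ι R (f k - f i)).prod =
      (l.map fun k => ι R (f k)).prod -
        ∑ s ∈ Finset.range l.length, ((l.set s i).map fun k => ι R (f k)).prod := by
  induction l with
  | nil => simp
  | cons y t ih =>
    have hfi := ι_mul_prod_map_ι_sub (R := R) f (f i) t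
    simp only [List.map_cons, List.prod_cons, List.length_cons, Finset.sum_range_succ',
      List.set_cons_zero, List.set_cons_succ]
    rw [map_sub, sub_mul, hfi, ih, mul_sub, Finset.mul_sum]
    abel

end ExteriorAlgebra

namespace Finset

variable {α : Type*} [LinearOrder α]

theorem sort_eq_sort_filter_lt_append (s : Finset α) (j : α) [DecidablePred (· < j)] :
    s.sort = (s.filter (· < j)).sort ++ (s.filter (¬ · < j)).sort := by
  refine (sortedLT_sort s).pairwise.eq_of_mem_iff ?_ fun a => ?_
  · refine List.pairwise_append.2
      ⟨(sortedLT_sort _).pairwise, (sortedLT_sort _).pairwise, fun a ha b hb => ?_⟩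
    simp only [mem_sort, mem_filter] at ha hb
    exact ha.2.trans_le (not_lt.1 hb.2)
  · simp only [mem_sort, List.mem_append, mem_filter]
    tauto

theorem sort_insert_eq_sort_filter_lt_append_cons {s : Finset α} {j : α} (hj : j ∉ s)
    [DecidablePred (· < j)] :
    (insert j s).sort = (s.filter (· < j)).sort ++ j :: (s.filter (¬ · < j)).sort := by
  have hgt : ∀ b ∈ (s.filter (¬ · < j)).sort, j < b := fun b hb => by
    simp only [mem_sort, mem_filter] at hb
    exact (not_lt.1 hb.2).lt_of_ne (ne_of_mem_of_not_mem hb.1 hj).symm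
  refine (sortedLT_sort _).pairwise.eq_of_mem_iff ?_ fun a => ?_
  · refine List.pairwise_append.2 ⟨(sortedLT_sort _).pairwise,
      List.pairwise_cons.2 ⟨hgt, (sortedLT_sort _).pairwise⟩, fun a ha b hb => ?_⟩
    simp only [mem_sort, mem_filter] at ha
    rcases List.mem_cons.1 hb with rfl | hb
    · exact ha.2
    · exact ha.2.trans (hgt b hb)
  · simp only [mem_sort, List.mem_append, List.mem_cons, mem_filter, mem_insert]
    tauto

end Finset

section Xi

open ExteriorAlgebra TensorProduct

variable {F : Type} [Field F] {m : ℕ}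

def uDiffProd (S : Finset (Fin m)) (i : Fin m) : ExtAlg F m :=
  ((S.sort).map fun k => ι F (Pi.single k 1 - Pi.single i 1)).prod

theorem uM_sub_sum_uList_set_eq_uDiffProd (S : Finset (Fin m)) (i : Fin m) :
    uM S - ∑ s ∈ Finset.range (S.sort).length, uList ((S.sort).set s i) =
      (uDiffProd S i : ExtAlg F m) :=
  (prod_map_ι_sub (fun k => Pi.single k 1) i _).symm

theorem uDiffProd_eq_zero_of_mem {S : Finset (Fin m)} {i : Fin m} (h : i ∈ S) :
    (uDiffProd S i : ExtAlg F m) = 0 :=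
  List.prod_eq_zero (List.mem_map.2 ⟨i, by simpa using h, by simp⟩)

theorem uM_insert {S : Finset (Fin m)} {j : Fin m} (hj : j ∉ S) :
    (uM (insert j S) : ExtAlg F m) = (-1 : F) ^ (S.filter (· < j)).card • (uGen j * uM S) := by
  rw [uM, uM, Finset.sort_insert_eq_sort_filter_lt_append_cons hj,
    Finset.sort_eq_sort_filter_lt_append S j]
  exact (prod_map_ι_append_cons (fun k => Pi.single k 1) _ _ j).trans
    (by rw [Finset.length_sort]; rfl)

theorem uGen_mul_uM {S : Finset (Fin m)} {j : Fin m} (hj : j ∉ S) :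
    (uGen j * uM S : ExtAlg F m) = (-1 : F) ^ (S.filter (· < j)).card • uM (insert j S) := by
  rw [uM_insert hj, smul_smul, ← mul_pow, neg_one_mul, neg_neg, one_pow, one_smul]

theorem neg_one_pow_smul_uDiffProd_insert {S : Finset (Fin m)} {j : Fin m} (hj : j ∉ S)
    (i : Fin m) :
    (-1 : F) ^ (S.filter (· < j)).card • (uDiffProd (insert j S) i : ExtAlg F m) =
      (uGen j - uGen i) * uDiffProd S i := by
  rw [uDiffProd, uDiffProd, Finset.sort_insert_eq_sort_filter_lt_append_cons hj,
    Finset.sort_eq_sort_filter_lt_append S j, prod_map_ι_append_cons, Finset.length_sort,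
    smul_smul, ← mul_pow, neg_one_mul, neg_neg, one_pow, one_smul, map_sub]
  rfl

theorem uGen_mul_uDiffProd (S : Finset (Fin m)) (i : Fin m) :
    (uGen i * uDiffProd S i : ExtAlg F m) = uGen i * uM S :=
  ι_mul_prod_map_ι_sub (fun k => Pi.single k 1) _ _

theorem uGen_mul_uM_eq_sub {S : Finset (Fin m)} {j : Fin m} (hj : j ∉ S) (i : Fin m) :
    (uGen i * uM S : ExtAlg F m) =
      uGen j * uDiffProd S i - (-1 : F) ^ (S.filter (· < j)).card • uDiffProd (insert j S) i := by
  rw [neg_one_pow_smul_uDiffProd_insert hj, sub_mul, sub_sub_cancel, uGen_mul_uDiffProd]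

def relCoeff (a : Fin m → F) (S : Finset (Fin m)) (i : Fin m) : MvPolynomial (Fin m) F :=
  C (a i) * tMon (lsupp a \ insert i S)

variable (a : Fin m → F) (S : Finset (Fin m))

theorem PLS_eq_sum_relCoeff_tmul_uDiffProd :
    PLS a S = ∑ i ∈ lsupp a \ S, relCoeff a S i ⊗ₜ[F] uDiffProd S i := by
  simp only [PLS, uM_sub_sum_uList_set_eq_uDiffProd]
  rfl

theorem QLS_eq_sum_relCoeff_tmul_uGen_mul_uM :
    QLS a S = ∑ i ∈ lsupp a \ S, relCoeff a S i ⊗ₜ[F] (uGen i * uM S) := by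
  refine Finset.sum_congr rfl fun i hi => ?_
  rw [uGen_mul_uM (Finset.mem_sdiff.1 hi).2, tmul_smul, smul_tmul', relCoeff, smul_eq_C_mul,
    ← mul_assoc, ← C_mul, Finset.filter_congr_decidable]

variable {a S}

theorem X_mul_relCoeff_insert {i j : Fin m} (hj : j ∈ lsupp a \ S) (hij : i ≠ j) :
    X j * relCoeff a (insert j S) i = relCoeff a S i := by
  have hj' : j ∈ lsupp a \ insert i S := by
    simp only [Finset.mem_sdiff, Finset.mem_insert, not_or] at hj ⊢
    exact ⟨hj.1, hij.symm, hj.2⟩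
  rw [relCoeff, relCoeff, mul_left_comm, Finset.insert_comm, Finset.sdiff_insert, tMon, tMon,
    Finset.mul_prod_erase _ _ hj']

theorem X_tmul_one_mul_PLS_insert {j : Fin m} (hj : j ∈ lsupp a \ S) :
    ((X j : MvPolynomial (Fin m) F) ⊗ₜ[F] (1 : ExtAlg F m)) * PLS a (insert j S) =
      ∑ i ∈ lsupp a \ S, relCoeff a S i ⊗ₜ[F] uDiffProd (insert j S) i := by
  rw [PLS_eq_sum_relCoeff_tmul_uDiffProd, Finset.mul_sum]
  calc _ = ∑ i ∈ lsupp a \ insert j S, relCoeff a S i ⊗ₜ[F] uDiffProd (insert j S) i :=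
        Finset.sum_congr rfl fun i hi => by
          rw [Algebra.TensorProduct.tmul_mul_tmul, one_mul,
            X_mul_relCoeff_insert hj (Finset.ne_of_mem_erase (Finset.sdiff_insert _ S j ▸ hi))]
    _ = _ := by
      refine Finset.sum_subset (Finset.sdiff_subset_sdiff le_rfl (Finset.subset_insert _ _))
        fun i hi hi' => ?_
      rw [uDiffProd_eq_zero_of_mem, tmul_zero]
      simp only [Finset.mem_sdiff, Finset.mem_insert, not_or] at hi hi' ⊢
      tauto

theorem QLS_eq_sub {j : Fin m} (hj : j ∈ lsupp a \ S) :
    QLS a S = ((1 : MvPolynomial (Fin m) F) ⊗ₜ[F] uGen j) * PLS a S -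
      (-1 : F) ^ (S.filter (· < j)).card •
        (((X j : MvPolynomial (Fin m) F) ⊗ₜ[F] (1 : ExtAlg F m)) * PLS a (insert j S)) := by
  rw [X_tmul_one_mul_PLS_insert hj, PLS_eq_sum_relCoeff_tmul_uDiffProd,
    QLS_eq_sum_relCoeff_tmul_uGen_mul_uM, Finset.mul_sum, Finset.smul_sum,
    ← Finset.sum_sub_distrib]
  refine Finset.sum_congr rfl fun i _ => ?_
  rw [Algebra.TensorProduct.tmul_mul_tmul, one_mul, ← tmul_smul, ← tmul_sub,
    uGen_mul_uM_eq_sub (Finset.mem_sdiff.1 hj).2]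

end Xi

theorem statement4_general
    (F : Type) [Field F] (m : ℕ)
    (a : Fin m → F)
    (S : Finset (Fin m)) (hS : S ⊆ lsupp a) :
    QLS a S ∈
      Ideal.span {ξ : XiAlg F m | ∃ T : Finset (Fin m), T ⊆ lsupp a ∧ ξ = PLS a T} := by
  obtain hempty | ⟨j, hj⟩ := (lsupp a \ S).eq_empty_or_nonempty
  · rw [QLS, hempty, Finset.sum_empty]
    exact zero_mem _
  · rw [QLS_eq_sub hj]
    refine sub_mem (Ideal.mul_mem_left _ _ (Ideal.subset_span ⟨S, hS, rfl⟩))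
      (Submodule.smul_of_tower_mem _ _ (Ideal.mul_mem_left _ _ (Ideal.subset_span
        ⟨insert j S, Finset.insert_subset (Finset.mem_sdiff.1 hj).1 hS, rfl⟩)))

/-- For every linear relation `L` and every `S ⊆ |L|`, the element `Q_{L,S}`
lies in the ideal of `Ξ` generated by the `P_{L,T}` with `T ⊆ |L|`. -/
theorem statement4
    (F : Type) [Field F] (n m : ℕ) (hn : 0 < n) (hm : 0 < m)
    (c : Fin m → Fin n → F) (hc : ∀ i, c i ≠ 0)
    (a : Fin m → F) (ha : IsLinRel c a)
    (S : Finset (Fin m)) (hS : S ⊆ lsupp a) :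
    QLS a S ∈
      Ideal.span {ξ : XiAlg F m | ∃ T : Finset (Fin m), T ⊆ lsupp a ∧ ξ = PLS a T} :=
  statement4_general F m a S hS
end
end

section
/- For every linear relation L and every subset S ⊆ |L|, the element P_{L,S} lies in the kernel K of ψ; that is, ψ(P_{L,S}) = 0 in T. -/
/-!
Under `ψ` a monomial `t_M ⊗ u_N` goes to `z_M⁻¹ z_N⁻¹ ⊗ dz_N`, so in the `i`-th summand of
`P_{L,S}` the term in which `j_s` is replaced by `i` carries the coefficient `z_{|L| ∖ {j_s}}⁻¹`,
independent of `i`. Summing over `i ∉ S` first, linearity of the wedge product in slot `s` and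
`Σ_{i ∉ S} a_i dz_i = -Σ_{j ∈ S} a_j dz_j` turn `Σ_i a_i dz_{S[j_s ↦ i]}` into `-a_{j_s} dz_S`,
since every other `j ∈ S` gives a repeated factor. What is left is `ψ(P_L) ⊗ dz_S`, and
`ψ(P_L) = (Σ a_i z_i) z_{|L|}⁻¹ = 0`.
-/

open scoped TensorProduct
open MvPolynomial

noncomputable section

open Function

section AlternatingMap

variable {R M N ι : Type*} [Semiring R] [AddCommMonoid M] [Module R M] [AddCommMonoid N]
  [Module R N] [Fintype ι] [DecidableEq ι]

theorem AlternatingMap.map_update_sum_smul_self (f : M [⋀^ι]→ₗ[R] N) (v : ι → M) (b : ι → R)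
    (t : ι) : f (update v t (∑ s, b s • v s)) = b t • f v := by
  rw [f.map_update_sum, Finset.sum_eq_single t]
  · rw [f.map_update_smul, update_eq_self]
  · intro s _ hst
    rw [f.map_update_smul, f.map_eq_zero_of_eq _ (i := t) (j := s) (by simp [update_of_ne hst])
      (Ne.symm hst), smul_zero]
  · simp

end AlternatingMap

namespace ExteriorAlgebra

variable {R M α : Type*} [CommRing R] [AddCommGroup M] [Module R M]

theorem list_prod_map_ι_eq_ιMulti (v : α → M) (l : List α) :
    (l.map fun j => ι R (v j)).prod = ιMulti R l.length fun u => v l[u] := by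
  rw [ιMulti_apply]
  simp only [Fin.getElem_fin]
  exact congrArg List.prod (List.ofFn_getElem_eq_map l fun j => ι R (v j)).symm

theorem list_prod_map_ι_set_eq_ιMulti (v : α → M) (l : List α) (u : Fin l.length) (i : α) :
    ((l.set u i).map fun j => ι R (v j)).prod
      = ιMulti R l.length (update (fun s => v l[s]) u (v i)) := by
  rw [ιMulti_apply]
  congr 1
  refine List.ext_getElem (by simp) fun s h₁ h₂ => ?_
  simp only [List.getElem_map, List.getElem_set, List.getElem_ofFn, update_apply, Fin.ext_iff]
  split_ifs <;> first | rfl | omega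

theorem sum_smul_list_prod_map_ι_set (v : α → M) (a : α → R) (T : Finset α) (l : List α)
    (hrel : ∑ i ∈ T, a i • v i = -∑ s : Fin l.length, a l[s] • v l[s]) (u : Fin l.length) :
    ∑ i ∈ T, a i • ((l.set u i).map fun j => ι R (v j)).prod
      = -(a l[u] • (l.map fun j => ι R (v j)).prod) := by
  simp_rw [list_prod_map_ι_set_eq_ιMulti, list_prod_map_ι_eq_ιMulti,
    ← AlternatingMap.map_update_smul, ← AlternatingMap.map_update_sum, hrel,
    AlternatingMap.map_update_neg]
  rw [AlternatingMap.map_update_sum_smul_self]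

end ExteriorAlgebra

section SortedList

variable {α β : Type*} [LinearOrder α]

theorem Finset.sum_getElem_sort [AddCommMonoid β] (S : Finset α) (f : α → β) :
    ∑ u : Fin (S.sort (· ≤ ·)).length, f (S.sort (· ≤ ·))[u] = ∑ j ∈ S, f j := by
  rw [← List.sum_ofFn]
  simp only [Fin.getElem_fin, List.ofFn_getElem_eq_map]
  rw [Finset.sum_eq_multiset_sum, ← S.sort_eq (· ≤ ·), Multiset.map_coe, Multiset.sum_coe]

theorem Finset.coe_sort_set {S : Finset α} {i : α} (hi : i ∉ S)
    (u : Fin (S.sort (· ≤ ·)).length) :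
    (((S.sort (· ≤ ·)).set u i : List α) : Multiset α)
      = (insert i (S.erase (S.sort (· ≤ ·))[u])).val := by
  rw [Finset.insert_val_of_notMem (fun h => hi (Finset.mem_of_mem_erase h)), Finset.erase_val,
    ← S.sort_eq (· ≤ ·), Multiset.coe_erase, Fin.getElem_fin, (S.sort_nodup _).erase_getElem,
    Multiset.coe_eq_coe.mpr (List.set_perm_cons_eraseIdx u.2 i), Multiset.cons_coe]

theorem Finset.prod_map_sort [CommMonoid β] (S : Finset α) (f : α → β) :
    ((S.sort (· ≤ ·)).map f).prod = ∏ j ∈ S, f j := by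
  rw [Finset.prod_eq_multiset_prod, ← S.sort_eq (· ≤ ·), Multiset.map_coe, Multiset.prod_coe]

theorem Finset.prod_map_sort_set [CommMonoid β] {S : Finset α} {i : α} (hi : i ∉ S)
    (u : Fin (S.sort (· ≤ ·)).length) (f : α → β) :
    (((S.sort (· ≤ ·)).set u i).map f).prod
      = ∏ j ∈ insert i (S.erase (S.sort (· ≤ ·))[u]), f j := by
  rw [Finset.prod_eq_multiset_prod, ← Finset.coe_sort_set hi, Multiset.map_coe, Multiset.prod_coe]

end SortedList

section LinearRelation

variable {F : Type} [Field F] {n m : ℕ}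

theorem coeff_single_zpoly (c : Fin m → Fin n → F) (i : Fin m) (j : Fin n) :
    coeff (Finsupp.single j 1) (zpoly c i) = c i j := by
  simp [zpoly, coeff_sum, coeff_C_mul, coeff_X, Finsupp.single_eq_single_iff]

theorem sum_smul_eq_zero_of_sum_C_mul_zpoly {c : Fin m → Fin n → F} {a : Fin m → F}
    {s : Finset (Fin m)} (h : ∑ i ∈ s, C (a i) * zpoly c i = 0) : ∑ i ∈ s, a i • c i = 0 := by
  funext j
  simpa [coeff_sum, coeff_C_mul, coeff_single_zpoly] using congrArg (coeff (Finsupp.single j 1)) h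

theorem aeval_PL {R : Type*} [CommRing R] [Algebra F R] (f : Fin m → R) (a : Fin m → F) :
    aeval f (PL a)
      = ∑ i ∈ lsupp a, a i • aeval f (tMon (lsupp a \ {i}) : MvPolynomial (Fin m) F) := by
  simp [PL, Algebra.smul_def]

theorem aeval_PL_eq_zero_s10 {R : Type*} [CommRing R] [Algebra F R] {a : Fin m → F}
    {z zinv : Fin m → R} (hz : ∀ i, z i * zinv i = 1) (hrel : ∑ i ∈ lsupp a, a i • z i = 0) :
    aeval zinv (PL a) = 0 := by
  have hmon : ∀ i ∈ lsupp a, aeval zinv (tMon (lsupp a \ {i}) : MvPolynomial (Fin m) F)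
      = z i * aeval zinv (tMon (lsupp a) : MvPolynomial (Fin m) F) := by
    intro i hi
    simp only [tMon, map_prod, aeval_X]
    rw [← Finset.mul_prod_erase _ _ hi, ← mul_assoc, hz, one_mul, Finset.sdiff_singleton_eq_erase]
  rw [aeval_PL, Finset.sum_congr rfl fun i hi => by rw [hmon i hi, ← smul_mul_assoc],
    ← Finset.sum_mul, hrel, zero_mul]

end LinearRelation

section TensorProduct

variable {F : Type} [Field F] {m : ℕ} {R B : Type*} [CommRing R] [Algebra F R] [Ring B]
  [Algebra F B]

theorem map_tmul_uList (ψ : XiAlg F m →ₐ[F] R ⊗[F] B) (zinv : Fin m → R) (e : Fin m → B)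
    (hψt : ∀ i, ψ ((X i : MvPolynomial (Fin m) F) ⊗ₜ[F] 1) = zinv i ⊗ₜ[F] 1)
    (hψu : ∀ i, ψ ((1 : MvPolynomial (Fin m) F) ⊗ₜ[F] uGen i) = zinv i ⊗ₜ[F] e i)
    (p : MvPolynomial (Fin m) F) (l : List (Fin m)) :
    ψ (p ⊗ₜ uList l) = aeval zinv (p * (l.map X).prod) ⊗ₜ (l.map e).prod := by
  have hleft : ψ.comp Algebra.TensorProduct.includeLeft
      = Algebra.TensorProduct.includeLeft.comp (aeval zinv) :=
    MvPolynomial.algHom_ext fun i => by simp [hψt]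
  have hright : ψ (1 ⊗ₜ uList l)
      = aeval zinv ((l.map X).prod : MvPolynomial (Fin m) F) ⊗ₜ (l.map e).prod := by
    induction l with
    | nil => simp [uList, ← Algebra.TensorProduct.one_def]
    | cons j l ih =>
      have hcons : (1 : MvPolynomial (Fin m) F) ⊗ₜ[F] uList (j :: l)
          = ((1 : MvPolynomial (Fin m) F) ⊗ₜ[F] (uGen j : ExtAlg F m))
            * ((1 : MvPolynomial (Fin m) F) ⊗ₜ[F] uList l) := by
        simp [uList, Algebra.TensorProduct.tmul_mul_tmul]
      rw [hcons, map_mul, hψu, ih, Algebra.TensorProduct.tmul_mul_tmul]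
      simp
  calc ψ (p ⊗ₜ uList l) = ψ (p ⊗ₜ 1) * ψ (1 ⊗ₜ uList l) := by
        rw [← map_mul, Algebra.TensorProduct.tmul_mul_tmul, mul_one, one_mul]
    _ = _ := by
        rw [← Algebra.TensorProduct.includeLeft_apply (S := F), ← AlgHom.comp_apply, hleft, hright]
        simp [Algebra.TensorProduct.tmul_mul_tmul]

theorem map_PLS_summand (ψ : XiAlg F m →ₐ[F] R ⊗[F] B) (zinv : Fin m → R) (e : Fin m → B)
    (hψ : ∀ p l, ψ (p ⊗ₜ uList l) = aeval zinv (p * (l.map X).prod) ⊗ₜ (l.map e).prod)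
    {L S : Finset (Fin m)} (hS : S ⊆ L) {i : Fin m} (hi : i ∈ L \ S) (r : F) :
    ψ ((C r * tMon (L \ insert i S)) ⊗ₜ[F]
        (uM S - ∑ s ∈ Finset.range (S.sort (· ≤ ·)).length, uList ((S.sort (· ≤ ·)).set s i)))
      = r • (aeval zinv (tMon (L \ {i}) : MvPolynomial (Fin m) F) ⊗ₜ ((S.sort (· ≤ ·)).map e).prod
        - ∑ u : Fin (S.sort (· ≤ ·)).length,
            aeval zinv (tMon (L \ {(S.sort (· ≤ ·))[u]}) : MvPolynomial (Fin m) F)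
              ⊗ₜ (((S.sort (· ≤ ·)).set u i).map e).prod) := by
  obtain ⟨hiL, hiS⟩ := Finset.mem_sdiff.mp hi
  have hmon : (tMon (L \ insert i S) : MvPolynomial (Fin m) F) * ((S.sort (· ≤ ·)).map X).prod
      = tMon (L \ {i}) := by
    rw [Finset.prod_map_sort, tMon, tMon, ← Finset.prod_sdiff (s₁ := S) (s₂ := L \ {i})]
    · congr 2
      ext x
      simp only [Finset.mem_sdiff, Finset.mem_insert, Finset.mem_singleton]
      tauto
    · intro x hx
      simp only [Finset.mem_sdiff, Finset.mem_singleton]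
      exact ⟨hS hx, fun h => hiS (h ▸ hx)⟩
  have hmon_set : ∀ u : Fin (S.sort (· ≤ ·)).length,
      (tMon (L \ insert i S) : MvPolynomial (Fin m) F) * (((S.sort (· ≤ ·)).set u i).map X).prod
        = tMon (L \ {(S.sort (· ≤ ·))[u]}) := by
    intro u
    have hu : (S.sort (· ≤ ·))[u] ∈ S := (S.mem_sort _).mp (List.getElem_mem _)
    rw [Finset.prod_map_sort_set hiS, tMon, tMon, ← Finset.prod_sdiff
      (s₁ := insert i (S.erase _)) (s₂ := L \ {(S.sort (· ≤ ·))[u]})]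
    · congr 2
      ext x
      simp only [Finset.mem_sdiff, Finset.mem_insert, Finset.mem_singleton, Finset.mem_erase]
      grind
    · intro x hx
      simp only [Finset.mem_sdiff, Finset.mem_insert, Finset.mem_singleton,
        Finset.mem_erase] at hx ⊢
      grind
  rw [C_mul', ← TensorProduct.smul_tmul', map_smul, TensorProduct.tmul_sub, map_sub,
    TensorProduct.tmul_sum, map_sum, Finset.sum_range, uM, hψ, hmon]
  simp_rw [hψ, hmon_set]

end TensorProduct

theorem statement10_general
    (F : Type) [Field F] (n m : ℕ)
    (c : Fin m → Fin n → F)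
    (R : Type) [CommRing R] [Algebra F R] [Algebra (MvPolynomial (Fin n) F) R]
    [IsScalarTower F (MvPolynomial (Fin n) F) R]
    (zinv : Fin m → R)
    (hzinv : ∀ i, algebraMap (MvPolynomial (Fin n) F) R (zpoly c i) * zinv i = 1)
    (ψ : XiAlg F m →ₐ[F] R ⊗[F] ExtAlg F n)
    (hψt : ∀ i, ψ ((X i : MvPolynomial (Fin m) F) ⊗ₜ[F] 1) = zinv i ⊗ₜ[F] 1)
    (hψu : ∀ i, ψ ((1 : MvPolynomial (Fin m) F) ⊗ₜ[F] uGen i)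
        = zinv i ⊗ₜ[F] ExteriorAlgebra.ι F (c i))
    (a : Fin m → F) (ha : IsLinRel c a)
    (S : Finset (Fin m)) (hS : S ⊆ lsupp a) :
    ψ (PLS a S) = 0 := by
  set L := lsupp a
  set l := S.sort (· ≤ ·)
  set w : List (Fin m) → ExtAlg F n := fun l => (l.map fun j => ExteriorAlgebra.ι F (c j)).prod
  set A : Fin m → R := fun j => aeval zinv (tMon (L \ {j}) : MvPolynomial (Fin m) F)
  have hψ := map_tmul_uList ψ zinv _ hψt hψu
  have hrel : ∑ i ∈ L \ S, a i • c i = -∑ u : Fin l.length, a l[u] • c l[u] := by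
    rw [Finset.sum_getElem_sort S fun j => a j • c j, eq_neg_iff_add_eq_zero, Finset.sum_sdiff hS,
      sum_smul_eq_zero_of_sum_C_mul_zpoly ha.2]
  have hPL : aeval zinv (PL a) = 0 := by
    refine aeval_PL_eq_zero_s10 hzinv ?_
    simpa [Algebra.smul_def, IsScalarTower.algebraMap_apply F (MvPolynomial (Fin n) F) R,
      MvPolynomial.algebraMap_eq] using congrArg (algebraMap (MvPolynomial (Fin n) F) R) ha.2
  calc ψ (PLS a S)
      = ∑ i ∈ L \ S, a i • (A i ⊗ₜ w l - ∑ u : Fin l.length, A l[u] ⊗ₜ w (l.set u i)) := by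
        rw [PLS, map_sum]
        exact Finset.sum_congr rfl fun i hi => map_PLS_summand ψ zinv _ hψ hS hi _
    _ = (∑ i ∈ L \ S, a i • A i) ⊗ₜ w l
          - ∑ u : Fin l.length, A l[u] ⊗ₜ ∑ i ∈ L \ S, a i • w (l.set u i) := by
        simp only [smul_sub, Finset.smul_sum, Finset.sum_sub_distrib, TensorProduct.sum_tmul,
          TensorProduct.tmul_sum, TensorProduct.smul_tmul', TensorProduct.tmul_smul]
        rw [Finset.sum_comm]
    _ = (∑ i ∈ L \ S, a i • A i + ∑ u : Fin l.length, a l[u] • A l[u]) ⊗ₜ w l := by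
        simp only [w, ExteriorAlgebra.sum_smul_list_prod_map_ι_set _ _ _ _ hrel]
        simp [TensorProduct.add_tmul, TensorProduct.sum_tmul, TensorProduct.tmul_neg,
          TensorProduct.tmul_smul, TensorProduct.smul_tmul']
    _ = aeval zinv (PL a) ⊗ₜ w l := by
        rw [Finset.sum_getElem_sort S fun j => a j • A j, Finset.sum_sdiff hS, aeval_PL]
    _ = 0 := by rw [hPL, TensorProduct.zero_tmul]

/-- For every linear relation `L` and every `S ⊆ |L|`, `ψ(P_{L,S}) = 0` in `T`. -/
theorem statement10
    (F : Type) [Field F] (n m : ℕ) (hn : 0 < n) (hm : 0 < m)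
    (c : Fin m → Fin n → F) (hc : ∀ i, c i ≠ 0)
    (R : Type) [CommRing R] [Algebra F R] [Algebra (MvPolynomial (Fin n) F) R]
    [IsScalarTower F (MvPolynomial (Fin n) F) R]
    [IsLocalization.Away (∏ i, zpoly c i) R]
    (zinv : Fin m → R)
    (hzinv : ∀ i, algebraMap (MvPolynomial (Fin n) F) R (zpoly c i) * zinv i = 1)
    (ψ : XiAlg F m →ₐ[F] R ⊗[F] ExtAlg F n)
    (hψt : ∀ i, ψ ((X i : MvPolynomial (Fin m) F) ⊗ₜ[F] 1) = zinv i ⊗ₜ[F] 1)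
    (hψu : ∀ i, ψ ((1 : MvPolynomial (Fin m) F) ⊗ₜ[F] uGen i)
        = zinv i ⊗ₜ[F] ExteriorAlgebra.ι F (c i))
    (a : Fin m → F) (ha : IsLinRel c a)
    (S : Finset (Fin m)) (hS : S ⊆ lsupp a) :
    ψ (PLS a S) = 0 :=
  statement10_general F n m c R zinv hzinv ψ hψt hψu a ha S hS
end
end

section
/- For every linear relation L and every index i ∈ |L|, the identity u_i · P_L − t_i · P_{L,{i}} = Q_{L,∅} holds in Ξ, where Q_{L,∅} = Σ_{j∈|L|} a_j t_{|L|∖{j}} u_j. -/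
open scoped TensorProduct
open MvPolynomial

noncomputable section

/-! Multiplying the `j`-th term of `P_{L,{i}}` by `t_i`
restores the monomial `t_{|L|∖{j}}`, so `t_i · P_{L,{i}} = Σ_{j ≠ i} a_j t_{|L|∖{j}} (u_i − u_j)`,
while `u_i · P_L = Σ_j a_j t_{|L|∖{j}} u_i`. In the difference the `u_i`-parts cancel for
`j ≠ i`, leaving `a_j t_{|L|∖{j}} u_j`, and the `j = i` term of `u_i · P_L` is already of
that form. -/

theorem Finset.sum_sub_sum_sdiff_singleton_sub {ι M : Type*} [DecidableEq ι] [AddCommGroup M]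
    {s : Finset ι} {i : ι} (hi : i ∈ s) (g h : ι → M) (hgh : g i = h i) :
    ∑ j ∈ s, g j - ∑ j ∈ s \ {i}, (g j - h j) = ∑ j ∈ s, h j := by
  rw [Finset.sum_eq_sum_sdiff_singleton_add hi g, Finset.sum_eq_sum_sdiff_singleton_add hi h,
    Finset.sum_sub_distrib, hgh]
  abel

section

variable {F : Type} [Field F] {m : ℕ}

theorem X_mul_tMon_sdiff_pair {s : Finset (Fin m)} {i j : Fin m} (hi : i ∈ s) (hji : j ≠ i) :
    (X i : MvPolynomial (Fin m) F) * tMon (s \ {j, i}) = tMon (s \ {j}) := by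
  have hpair : s \ {j, i} = (s \ {j}).erase i := by
    ext k
    simp only [Finset.mem_sdiff, Finset.mem_insert, Finset.mem_singleton, Finset.mem_erase]
    tauto
  rw [hpair, tMon, tMon, Finset.mul_prod_erase _ _ (by simpa [Ne.symm hji] using hi)]

theorem PLS_singleton (a : Fin m → F) (i : Fin m) :
    PLS a {i} = ∑ j ∈ lsupp a \ {i},
      (C (a j) * tMon (lsupp a \ {j, i})) ⊗ₜ[F] (uGen i - uGen j) := by
  refine Finset.sum_congr rfl fun j _ => ?_
  simp [uM, uList, Finset.sort_singleton]

theorem X_tmul_one_mul_PLS_singleton (a : Fin m → F) {i : Fin m} (hi : i ∈ lsupp a) :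
    ((X i : MvPolynomial (Fin m) F) ⊗ₜ[F] (1 : ExtAlg F m)) * PLS a {i}
      = ∑ j ∈ lsupp a \ {i}, (C (a j) * tMon (lsupp a \ {j})) ⊗ₜ[F] (uGen i - uGen j) := by
  rw [PLS_singleton, Finset.mul_sum]
  refine Finset.sum_congr rfl fun j hj => ?_
  have hji : j ≠ i := (Finset.mem_sdiff.1 hj).2 ∘ Finset.mem_singleton.2
  rw [Algebra.TensorProduct.tmul_mul_tmul, one_mul, mul_left_comm, X_mul_tMon_sdiff_pair hi hji]

theorem one_tmul_uGen_mul_PL_tmul_one (a : Fin m → F) (i : Fin m) :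
    ((1 : MvPolynomial (Fin m) F) ⊗ₜ[F] uGen i) * (PL a ⊗ₜ[F] (1 : ExtAlg F m))
      = ∑ j ∈ lsupp a, (C (a j) * tMon (lsupp a \ {j})) ⊗ₜ[F] uGen i := by
  rw [Algebra.TensorProduct.tmul_mul_tmul, one_mul, mul_one, PL, TensorProduct.sum_tmul]

end

theorem statement11_general
    (F : Type) [Field F] (m : ℕ)
    (a : Fin m → F)
    (i : Fin m) (hi : i ∈ lsupp a) :
    ((1 : MvPolynomial (Fin m) F) ⊗ₜ[F] uGen i) * (PL a ⊗ₜ[F] (1 : ExtAlg F m))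
      - ((X i : MvPolynomial (Fin m) F) ⊗ₜ[F] (1 : ExtAlg F m)) * PLS a {i}
      = ∑ j ∈ lsupp a, (C (a j) * tMon (lsupp a \ {j})) ⊗ₜ[F] uGen j := by
  rw [one_tmul_uGen_mul_PL_tmul_one, X_tmul_one_mul_PLS_singleton a hi]
  simp only [TensorProduct.tmul_sub]
  exact Finset.sum_sub_sum_sdiff_singleton_sub hi _ _ rfl

/-- For every linear relation `L` and every `i ∈ |L|`,
`u_i · P_L − t_i · P_{L,{i}} = Q_{L,∅} = Σ_{j∈|L|} a_j t_{|L|∖{j}} u_j` in `Ξ`. -/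
theorem statement11
    (F : Type) [Field F] (n m : ℕ) (hn : 0 < n) (hm : 0 < m)
    (c : Fin m → Fin n → F) (hc : ∀ i, c i ≠ 0)
    (a : Fin m → F) (ha : IsLinRel c a)
    (i : Fin m) (hi : i ∈ lsupp a) :
    ((1 : MvPolynomial (Fin m) F) ⊗ₜ[F] uGen i) * (PL a ⊗ₜ[F] (1 : ExtAlg F m))
      - ((X i : MvPolynomial (Fin m) F) ⊗ₜ[F] (1 : ExtAlg F m)) * PLS a {i}
      = ∑ j ∈ lsupp a, (C (a j) * tMon (lsupp a \ {j})) ⊗ₜ[F] uGen j :=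
  statement11_general F m a i hi
end
end

section
/- If L, L_1, L_2 are linear relations with L = L_1 + L_2 (coefficientwise) and |L_1| ⊊ |L|, |L_2| ⊊ |L|, then for every subset S ⊆ |L| the element P_{L,S} lies in the ideal of Ξ generated by the elements P_{L_1,T} for T ⊆ |L_1| together with the elements P_{L_2,T'} for T' ⊆ |L_2|. -/
/-!
With `P_{L,S} = ∑_{i ∈ |L| ∖ S} a_i t_{|L|∖(S∪i)} ⊗ ∏_{j ∈ S} (u_j - u_i)`, the coefficients
of `L_k` vanish off `|L_k|`, so `L = L₁ + L₂` splits `P_{L,S}` as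
`t_{|L|∖(|L₁|∪S)} P_{L₁,S} + t_{|L|∖(|L₂|∪S)} P_{L₂,S}`.
It remains to see that `P_{L',S}` lies in the ideal of the `P_{L',T}`, `T ⊆ |L'|`, also when
`S ⊄ |L'|`. For `j ∈ S ∖ |L'|` and `j₀ ∈ |L'| ∖ S`, the telescoping
`u_j - u_i = (u_j - u_{j₀}) + (u_{j₀} - u_i)` gives
`P_{L',S} = ±((u_j - u_{j₀}) P_{L',S∖j} ± t_{j₀} P_{L',(S∖j)∪j₀})`,
where both index sets have fewer elements outside `|L'|`; if `|L'| ⊆ S ∖ j`, then `P_{L',S} = 0`.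
-/

open scoped TensorProduct
open MvPolynomial

noncomputable section

namespace ExteriorAlgebra

variable {R M α : Type*} [CommRing R] [AddCommGroup M] [Module R M]

theorem list_prod_map_ι_perm {l l' : List α} (h : l.Perm l') :
    (∀ f : α → M, (l.map fun x => ι R (f x)).prod = (l'.map fun x => ι R (f x)).prod) ∨
      ∀ f : α → M, (l.map fun x => ι R (f x)).prod = -(l'.map fun x => ι R (f x)).prod := by
  induction h with
  | nil => exact Or.inl fun _ => rfl
  | cons x _ ih =>
    rcases ih with ih | ih
    · exact Or.inl fun f => by simp only [List.map_cons, List.prod_cons, ih f]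
    · exact Or.inr fun f => by simp only [List.map_cons, List.prod_cons, ih f, mul_neg]
  | swap x y t =>
    refine Or.inr fun f => ?_
    simp only [List.map_cons, List.prod_cons, ← mul_assoc, ← neg_mul,
      eq_neg_of_add_eq_zero_left (ι_add_mul_swap (f y) (f x))]
  | trans _ _ ih₁ ih₂ =>
    rcases ih₁ with ih₁ | ih₁ <;> rcases ih₂ with ih₂ | ih₂
    · exact Or.inl fun f => (ih₁ f).trans (ih₂ f)
    · exact Or.inr fun f => (ih₁ f).trans (ih₂ f)
    · exact Or.inr fun f => by rw [ih₁ f, ih₂ f]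
    · exact Or.inl fun f => by rw [ih₁ f, ih₂ f, neg_neg]

theorem ι_mul_list_prod_map_ι_of_mem [DecidableEq α] {l : List α} {x : α} (hx : x ∈ l)
    (f : α → M) :
    ι R (f x) * (l.map fun y => ι R (f y)).prod = 0 := by
  have hperm : (x :: l).Perm (x :: x :: l.erase x) := (List.perm_cons_erase hx).cons x
  have hzero : ι R (f x) * (ι R (f x) * ((l.erase x).map fun y => ι R (f y)).prod) = 0 := by
    rw [← mul_assoc, ι_sq_zero, zero_mul]
  rcases list_prod_map_ι_perm (R := R) (M := M) hperm with h | h <;>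
    simpa only [List.map_cons, List.prod_cons, hzero, neg_zero] using h f

end ExteriorAlgebra

namespace LinRel

variable {F : Type} [Field F] {m : ℕ}

lemma mem_lsupp {b : Fin m → F} {i : Fin m} : i ∈ lsupp b ↔ b i ≠ 0 := by
  simp [lsupp]

lemma uList_cons (j : Fin m) (l : List (Fin m)) :
    (uList (j :: l) : ExtAlg F m) = uGen j * uList l := by
  simp [uList]

lemma uGen_mul_uList_of_mem {i : Fin m} {l : List (Fin m)} (hi : i ∈ l) :
    (uGen i * uList l : ExtAlg F m) = 0 :=
  ExteriorAlgebra.ι_mul_list_prod_map_ι_of_mem hi fun j => Pi.single j 1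

def wedgeDiff (i : Fin m) (l : List (Fin m)) : ExtAlg F m :=
  (l.map fun j => ExteriorAlgebra.ι F (Pi.single j 1 - Pi.single i 1)).prod

lemma wedgeDiff_cons (i j : Fin m) (l : List (Fin m)) :
    (wedgeDiff i (j :: l) : ExtAlg F m) = (uGen j - uGen i) * wedgeDiff i l := by
  simp [wedgeDiff, uGen]

lemma wedgeDiff_eq (i : Fin m) (l : List (Fin m)) :
    (wedgeDiff i l : ExtAlg F m) = uList l - ∑ s ∈ Finset.range l.length, uList (l.set s i) := by
  induction l with
  | nil => simp [wedgeDiff, uList]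
  | cons j l ih =>
    have hvanish : ∀ s ∈ Finset.range l.length, (uGen i * uList (l.set s i) : ExtAlg F m) = 0 :=
      fun s hs => uGen_mul_uList_of_mem (List.mem_set (Finset.mem_range.1 hs) i)
    rw [wedgeDiff_cons, ih, sub_mul, mul_sub, mul_sub, Finset.mul_sum, Finset.mul_sum,
      Finset.sum_eq_zero hvanish, sub_zero, List.length_cons, Finset.sum_range_succ']
    simp only [List.set_cons_zero, List.set_cons_succ, uList_cons]
    abel

lemma wedgeDiff_perm {l l' : List (Fin m)} (h : l.Perm l') :
    (∀ i, (wedgeDiff i l : ExtAlg F m) = wedgeDiff i l') ∨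
      ∀ i, (wedgeDiff i l : ExtAlg F m) = -wedgeDiff i l' :=
  (ExteriorAlgebra.list_prod_map_ι_perm h).imp (fun h _ => h _) fun h _ => h _

/-- `P_{b,l}` for an ordered list `l`, with the summation range `|b|` replaced by a frame `A`. -/
def framedPLS (A : Finset (Fin m)) (b : Fin m → F) (l : List (Fin m)) : XiAlg F m :=
  ∑ i ∈ A \ l.toFinset, (C (b i) * tMon (A \ insert i l.toFinset)) ⊗ₜ[F] wedgeDiff i l

lemma PLS_eq_framedPLS (b : Fin m → F) (S : Finset (Fin m)) :
    PLS b S = framedPLS (lsupp b) b (S.sort (· ≤ ·)) := by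
  simp only [PLS, framedPLS, Finset.sort_toFinset, wedgeDiff_eq, uM]

lemma framedPLS_add (A : Finset (Fin m)) (b b' : Fin m → F) (l : List (Fin m)) :
    framedPLS A (b + b') l = framedPLS A b l + framedPLS A b' l := by
  simp only [framedPLS, ← Finset.sum_add_distrib, Pi.add_apply, map_add, add_mul,
    TensorProduct.add_tmul]

lemma tMon_sdiff_mul_tMon_sdiff {A B L : Finset (Fin m)} {i : Fin m} (hBA : B ⊆ A) (hi : i ∈ B) :
    (tMon (A \ (B ∪ L)) * tMon (B \ insert i L) : MvPolynomial (Fin m) F)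
      = tMon (A \ insert i L) := by
  rw [tMon, tMon, tMon, ← Finset.prod_union]
  · congr 1
    ext x
    have := @hBA x
    simp only [Finset.mem_union, Finset.mem_sdiff, Finset.mem_insert]
    grind
  · exact Finset.disjoint_left.2 fun x hx hx' =>
      (Finset.mem_sdiff.1 hx).2 (Finset.mem_union_left _ (Finset.mem_sdiff.1 hx').1)

lemma framedPLS_eq_tMon_mul {A : Finset (Fin m)} {b : Fin m → F} (hbA : lsupp b ⊆ A)
    (l : List (Fin m)) :
    framedPLS A b l = (tMon (A \ (lsupp b ∪ l.toFinset)) ⊗ₜ[F] 1) * framedPLS (lsupp b) b l := by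
  rw [framedPLS, framedPLS, Finset.mul_sum,
    ← Finset.sum_subset (Finset.sdiff_subset_sdiff hbA le_rfl) fun i hi hib => ?vanish]
  · refine Finset.sum_congr rfl fun i hi => ?_
    rw [Algebra.TensorProduct.tmul_mul_tmul, one_mul, mul_left_comm,
      tMon_sdiff_mul_tMon_sdiff hbA (Finset.mem_sdiff.1 hi).1]
  · have hbi : b i = 0 := by
      by_contra h
      exact hib (Finset.mem_sdiff.2 ⟨mem_lsupp.2 h, (Finset.mem_sdiff.1 hi).2⟩)
    rw [hbi, map_zero, zero_mul, TensorProduct.zero_tmul]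

lemma framedPLS_perm {A : Finset (Fin m)} {b : Fin m → F} {l l' : List (Fin m)} (h : l.Perm l') :
    framedPLS A b l = framedPLS A b l' ∨ framedPLS A b l = -framedPLS A b l' := by
  rw [framedPLS, framedPLS, List.toFinset_eq_of_perm _ _ h]
  refine (wedgeDiff_perm (F := F) h).imp (fun hw => ?_) fun hw => ?_
  · simp only [hw]
  · simp only [hw, TensorProduct.tmul_neg, Finset.sum_neg_distrib]

lemma framedPLS_eq_zero_of_subset {A : Finset (Fin m)} (b : Fin m → F) {l : List (Fin m)}
    (h : A ⊆ l.toFinset) : framedPLS A b l = 0 := by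
  rw [framedPLS, Finset.sdiff_eq_empty_iff_subset.2 h, Finset.sum_empty]

lemma X_mul_framedPLS_cons {A : Finset (Fin m)} (b : Fin m → F) {j₀ : Fin m} {l : List (Fin m)}
    (hj₀ : j₀ ∈ A) (hj₀l : j₀ ∉ l) :
    (X j₀ ⊗ₜ[F] 1) * framedPLS A b (j₀ :: l) = ∑ i ∈ A \ l.toFinset,
      (C (b i) * tMon (A \ insert i l.toFinset)) ⊗ₜ[F] ((uGen j₀ - uGen i) * wedgeDiff i l) := by
  have hj₀A : j₀ ∈ A \ l.toFinset := Finset.mem_sdiff.2 ⟨hj₀, by simpa using hj₀l⟩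
  rw [← Finset.sum_erase _ (by rw [sub_self, zero_mul, TensorProduct.tmul_zero]),
    ← Finset.sdiff_insert, framedPLS, List.toFinset_cons, Finset.mul_sum]
  refine Finset.sum_congr rfl fun i hi => ?_
  have hj₀i : j₀ ∈ A \ insert i l.toFinset := by
    simp only [Finset.mem_sdiff, Finset.mem_insert] at hi hj₀A ⊢
    grind
  rw [Algebra.TensorProduct.tmul_mul_tmul, one_mul, wedgeDiff_cons, Finset.insert_comm i j₀,
    Finset.sdiff_insert, tMon, tMon, ← Finset.mul_prod_erase _ _ hj₀i, mul_left_comm]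

lemma framedPLS_cons_of_notMem {A : Finset (Fin m)} (b : Fin m → F) {j j₀ : Fin m}
    {l : List (Fin m)} (hj : j ∉ A) (hj₀ : j₀ ∈ A) (hj₀l : j₀ ∉ l) :
    framedPLS A b (j :: l) = (1 ⊗ₜ[F] (uGen j - uGen j₀)) * framedPLS A b l
      + (X j₀ ⊗ₜ[F] 1) * framedPLS A b (j₀ :: l) := by
  rw [X_mul_framedPLS_cons b hj₀ hj₀l, framedPLS, framedPLS, List.toFinset_cons,
    Finset.sdiff_insert_of_notMem hj, Finset.mul_sum, ← Finset.sum_add_distrib]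
  refine Finset.sum_congr rfl fun i _ => ?_
  rw [Finset.insert_comm, Finset.sdiff_insert_of_notMem hj, wedgeDiff_cons,
    Algebra.TensorProduct.tmul_mul_tmul, one_mul, ← TensorProduct.tmul_add, ← add_mul,
    sub_add_sub_cancel]

def relIdeal (b : Fin m → F) : Ideal (XiAlg F m) :=
  Ideal.span {ξ : XiAlg F m | ∃ T : Finset (Fin m), T ⊆ lsupp b ∧ ξ = PLS b T}

lemma framedPLS_mem_iff (I : Ideal (XiAlg F m)) (b : Fin m → F) {l : List (Fin m)}
    (hl : l.Nodup) : framedPLS (lsupp b) b l ∈ I ↔ PLS b l.toFinset ∈ I := by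
  have hperm : l.Perm (l.toFinset.sort (· ≤ ·)) :=
    List.perm_of_nodup_nodup_toFinset_eq hl (Finset.sort_nodup _ _) (Finset.sort_toFinset _ _).symm
  rw [PLS_eq_framedPLS]
  rcases framedPLS_perm (b := b) hperm with h | h <;> rw [h]
  exact neg_mem_iff

theorem PLS_mem_relIdeal (b : Fin m → F) (S : Finset (Fin m)) : PLS b S ∈ relIdeal b := by
  induction hk : (S \ lsupp b).card using Nat.strong_induction_on generalizing S with
  | _ k ih =>
  by_cases hS : S ⊆ lsupp b
  · exact Ideal.subset_span ⟨S, hS, rfl⟩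
  obtain ⟨j, hjS, hjb⟩ := Finset.not_subset.1 hS
  set S₀ := S.erase j
  have hjS₀ : j ∉ S₀ := Finset.notMem_erase j S
  have hcard : (S₀ \ lsupp b).card < k := by
    rw [← hk]
    refine Finset.card_lt_card ⟨Finset.sdiff_subset_sdiff (Finset.erase_subset j S) le_rfl,
      fun h => hjS₀ (Finset.mem_sdiff.1 (h (Finset.mem_sdiff.2 ⟨hjS, hjb⟩))).1⟩
  have hS₀ : PLS b S₀ ∈ relIdeal b := ih _ hcard S₀ rfl
  have hnodup : ∀ x ∉ S₀, (x :: S₀.sort (· ≤ ·)).Nodup := fun x hx =>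
    List.nodup_cons.2 ⟨by simpa using hx, Finset.sort_nodup _ _⟩
  have hj := framedPLS_mem_iff (relIdeal b) b (hnodup j hjS₀)
  rw [List.toFinset_cons, Finset.sort_toFinset, Finset.insert_erase hjS] at hj
  rw [← hj]
  by_cases hbS₀ : lsupp b ⊆ S₀
  · rw [framedPLS_eq_zero_of_subset b (by simpa using hbS₀.trans (Finset.subset_insert j S₀))]
    exact zero_mem _
  obtain ⟨j₀, hj₀b, hj₀S₀⟩ := Finset.not_subset.1 hbS₀
  have hj₀ := framedPLS_mem_iff (relIdeal b) b (hnodup j₀ hj₀S₀)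
  rw [List.toFinset_cons, Finset.sort_toFinset] at hj₀
  rw [framedPLS_cons_of_notMem b hjb hj₀b (by simpa using hj₀S₀), ← PLS_eq_framedPLS]
  refine add_mem (Ideal.mul_mem_left _ _ hS₀) (Ideal.mul_mem_left _ _ (hj₀.2 ?_))
  refine ih _ ?_ _ rfl
  rwa [Finset.insert_sdiff_of_mem _ hj₀b]

end LinRel

open LinRel in
theorem statement13_general
    (F : Type) [Field F] (m : ℕ)
    (a a₁ a₂ : Fin m → F)
    (hsum : a = a₁ + a₂)
    (h₁ : lsupp a₁ ⊂ lsupp a) (h₂ : lsupp a₂ ⊂ lsupp a)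
    (S : Finset (Fin m)) :
    PLS a S ∈
      Ideal.span ({ξ : XiAlg F m | ∃ T : Finset (Fin m), T ⊆ lsupp a₁ ∧ ξ = PLS a₁ T} ∪
        {ξ : XiAlg F m | ∃ T' : Finset (Fin m), T' ⊆ lsupp a₂ ∧ ξ = PLS a₂ T'}) := by
  subst hsum
  rw [PLS_eq_framedPLS, framedPLS_add, framedPLS_eq_tMon_mul h₁.subset,
    framedPLS_eq_tMon_mul h₂.subset, ← PLS_eq_framedPLS, ← PLS_eq_framedPLS]
  exact add_mem
    (Ideal.mul_mem_left _ _ (Ideal.span_mono Set.subset_union_left (PLS_mem_relIdeal a₁ S)))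
    (Ideal.mul_mem_left _ _ (Ideal.span_mono Set.subset_union_right (PLS_mem_relIdeal a₂ S)))

/-- If `L = L₁ + L₂` with `|L₁| ⊊ |L|` and `|L₂| ⊊ |L|`, then for every
`S ⊆ |L|` the element `P_{L,S}` lies in the ideal generated by the `P_{L₁,T}` (`T ⊆ |L₁|`)
together with the `P_{L₂,T'}` (`T' ⊆ |L₂|`). -/
theorem statement13
    (F : Type) [Field F] (n m : ℕ) (hn : 0 < n) (hm : 0 < m)
    (c : Fin m → Fin n → F) (hc : ∀ i, c i ≠ 0)
    (a a₁ a₂ : Fin m → F)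
    (ha : IsLinRel c a) (ha₁ : IsLinRel c a₁) (ha₂ : IsLinRel c a₂)
    (hsum : a = a₁ + a₂)
    (h₁ : lsupp a₁ ⊂ lsupp a) (h₂ : lsupp a₂ ⊂ lsupp a)
    (S : Finset (Fin m)) (hS : S ⊆ lsupp a) :
    PLS a S ∈
      Ideal.span ({ξ : XiAlg F m | ∃ T : Finset (Fin m), T ⊆ lsupp a₁ ∧ ξ = PLS a₁ T} ∪
        {ξ : XiAlg F m | ∃ T' : Finset (Fin m), T' ⊆ lsupp a₂ ∧ ξ = PLS a₂ T'}) :=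
  statement13_general F m a a₁ a₂ hsum h₁ h₂ S
end
end

section
/- The kernel of h equals the ideal of F_2[t_α : α ∈ F_2^n∖{0}] generated by the polynomials t_α t_β + t_α t_γ + t_β t_γ, where (α, β, γ) ranges over all triples of pairwise distinct nonzero elements of F_2^n with α + β + γ = 0. Consequently, the subring of R generated by the elements z_α^{-1} is isomorphic to F_2[t_α : α ∈ F_2^n∖{0}]/(t_α t_β + t_α t_γ + t_β t_γ : α + β + γ = 0). -/
open MvPolynomial

noncomputable section

/-- The nonzero vectors of `F₂ⁿ`, indexing all nonzero homogeneous linear polynomials. -/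
abbrev NzVec (n : ℕ) := {v : Fin n → ZMod 2 // v ≠ 0}

/-- `z_α = α₁x₁ + ⋯ + α_nx_n`. -/
def zvec {n : ℕ} (α : NzVec n) : MvPolynomial (Fin n) (ZMod 2) :=
  ∑ j, C (α.1 j) * X j

/-!
Each relation lies in the kernel: `z_α⁻¹z_β⁻¹ + z_α⁻¹z_γ⁻¹ + z_β⁻¹z_γ⁻¹` equals
`(z_α + z_β + z_γ) z_α⁻¹z_β⁻¹z_γ⁻¹`, and `z_α + z_β + z_γ = z_{α+β+γ} = 0`.

Conversely, call a monomial in the `t_α` normal if the indices of its variables have pairwise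
distinct numbers of leading zeros. If `α ≠ β` have the same number of leading zeros, then
`γ = α + β` has more, so rewriting `t_α t_β` as `t_α t_γ + t_β t_γ` modulo the relations
decreases `∑ d_α (n - leadingZeros α)`; hence every polynomial is congruent to a combination of
normal monomials. The images `∏ z_α^{-d_α}` of the normal monomials are linearly independent.
After clearing denominators this is a statement about products of powers of linear forms, proved
by induction on `n`: over `F₂[x₂, …, x_n]` the forms with `α₁ = 0` are constants and those with
`α₁ = 1` are `x₁ + c` with pairwise distinct `c`, of which a normal monomial involves at most one.
Finally the polynomials `∏ᵢ (X - cᵢ)^(Mᵢ - tᵢ)`, with `t ≤ M` supported in at most one point, are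
linearly independent, because among those with `tᵢ > 0` the one with the largest `tᵢ` is the
only one not divisible by `(X - cᵢ)^(Mᵢ - tᵢ + 1)`.
-/

lemma ZMod.eq_zero_or_eq_one (a : ZMod 2) : a = 0 ∨ a = 1 := by
  revert a
  decide

lemma pow_mul_pow_of_mul_eq_one {M : Type*} [CommMonoid M] {a b : M} (h : a * b = 1) {m d : ℕ}
    (hd : d ≤ m) : a ^ m * b ^ d = a ^ (m - d) := by
  rw [← Nat.sub_add_cancel hd, pow_add, mul_assoc, ← mul_pow, h, one_pow, mul_one,
    Nat.add_sub_cancel]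

lemma mul_add_mul_add_mul_eq_zero {R : Type*} [CommRing R] {a b c x y z : R} (ha : a * x = 1)
    (hb : b * y = 1) (hc : c * z = 1) (h : a + b + c = 0) : x * y + x * z + y * z = 0 := by
  linear_combination (x * y * z) * h - (y * z) * ha - (x * z) * hb - (x * y) * hc

lemma prod_pi_fin_succ_zmod_two {M : Type*} [CommMonoid M] {n : ℕ}
    (f : (Fin (n + 1) → ZMod 2) → M) :
    ∏ v, f v = (∏ w, f (Fin.cons 0 w)) * ∏ l, f (Fin.cons 1 l) := by
  rw [← (Fin.consEquiv fun _ => ZMod 2).prod_comp, Fintype.prod_prod_type]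
  exact Fin.prod_univ_two _

theorem LinearIndepOn.smul_prod {R S A ι ι' : Type*} [Semiring R] [Semiring S] [AddCommMonoid A]
    [Module R S] [Module S A] [Module R A] [IsScalarTower R S A] {b : ι → S} {c : ι' → A}
    {s : Set ι} {t : Set ι'} (hb : LinearIndepOn R b s) (hc : LinearIndepOn S c t) :
    LinearIndepOn R (fun p : ι × ι' => b p.1 • c p.2) (s ×ˢ t) :=
  (linearIndependent_equiv' (Equiv.Set.prod s t) rfl).mpr (linearIndependent_smul hb hc)

theorem MvPolynomial.eq_zero_of_linearIndepOn_aeval_monomial {σ R A : Type*} [CommRing R]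
    [CommRing A] [Algebra R A] {f : σ → A} {s : Set (σ →₀ ℕ)}
    (hs : LinearIndepOn R (fun d => aeval f (monomial d (1 : R))) s) {q : MvPolynomial σ R}
    (hq : q ∈ restrictSupport R s) (h : aeval f q = 0) : q = 0 := by
  classical
  refine support_eq_empty.mp (Finset.eq_empty_of_forall_notMem fun d hd => ?_)
  refine mem_support_iff.mp hd (linearIndepOn_iff'.mp hs q.support (coeff · q) hq ?_ d hd)
  rw [← h]
  conv_rhs => rw [q.as_sum, map_sum]
  refine Finset.sum_congr rfl fun d _ => ?_
  rw [← map_smul, smul_monomial, smul_eq_mul, mul_one]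

namespace Polynomial

variable {D ι : Type*} [CommRing D] [Fintype ι] {c : ι → D}

lemma X_sub_C_pow_dvd_prod {M t t' : ι → ℕ} {i : ι} (hti : t i ≤ M i) (hlt : t' i < t i) :
    (X - C (c i)) ^ (M i - t i + 1) ∣ ∏ j, (X - C (c j)) ^ (M j - t' j) :=
  (pow_dvd_pow _ (by omega)).trans (Finset.dvd_prod_of_mem _ (Finset.mem_univ i))

variable [IsDomain D]

lemma not_X_sub_C_pow_succ_dvd_C_mul_prod (hc : Function.Injective c) {b : D} (hb : b ≠ 0)
    (M t : ι → ℕ) (i : ι) :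
    ¬ (X - C (c i)) ^ (M i - t i + 1) ∣ C b * ∏ j, (X - C (c j)) ^ (M j - t j) := by
  classical
  rw [← Finset.mul_prod_erase _ _ (Finset.mem_univ i), mul_left_comm, pow_succ,
    mul_dvd_mul_iff_left (pow_ne_zero _ (X_sub_C_ne_zero _)), dvd_iff_isRoot]
  simp only [IsRoot, eval_mul, eval_C, eval_prod, eval_pow, eval_sub, eval_X]
  refine mul_ne_zero hb (Finset.prod_ne_zero_iff.mpr fun j hj => pow_ne_zero _ ?_)
  exact sub_ne_zero.mpr fun h => Finset.ne_of_mem_erase hj (hc h).symm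

theorem linearIndepOn_prod_X_sub_C_pow (hc : Function.Injective c) (M : ι → ℕ) :
    LinearIndepOn D (fun t : ι → ℕ => ∏ i, (X - C (c i)) ^ (M i - t i))
      {t | t ≤ M ∧ (Function.support t).Subsingleton} := by
  classical
  rw [linearIndepOn_iff']
  intro s g hs hsum
  have hsupp : ∀ t ∈ s, ∀ i j, t i ≠ 0 → j ≠ i → t j = 0 := fun t ht i j hi hji =>
    by_contra fun hj => hji ((hs ht).2 hj hi)
  have hnonzero : ∀ t ∈ s, t ≠ 0 → g t = 0 := by
    intro t₀ ht₀ hne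
    by_contra hg₀
    obtain ⟨i, hi⟩ : ∃ i, t₀ i ≠ 0 := Function.ne_iff.mp hne
    obtain ⟨t, ht, hmax⟩ := (s.filter fun t => g t ≠ 0 ∧ t i ≠ 0).exists_max_image (· i)
      ⟨t₀, Finset.mem_filter.mpr ⟨ht₀, hg₀, hi⟩⟩
    obtain ⟨ht, hgt, hti⟩ := Finset.mem_filter.mp ht
    have hlt : ∀ t' ∈ s.erase t, g t' ≠ 0 → t' i < t i := by
      intro t' ht' hg
      obtain ⟨hne', ht'⟩ := Finset.mem_erase.mp ht'
      by_cases hi' : t' i = 0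
      · omega
      refine lt_of_le_of_ne (hmax t' (Finset.mem_filter.mpr ⟨ht', hg, hi'⟩)) fun h => hne' ?_
      ext j
      by_cases hj : j = i
      · rw [hj, h]
      · rw [hsupp t' ht' i j hi' hj, hsupp t ht i j hti hj]
    rw [← Finset.add_sum_erase s _ ht, add_eq_zero_iff_eq_neg] at hsum
    refine not_X_sub_C_pow_succ_dvd_C_mul_prod hc hgt M t i ?_
    rw [← smul_eq_C_mul, hsum, dvd_neg]
    refine Finset.dvd_sum fun t' ht' => ?_
    by_cases hg : g t' = 0
    · simp [hg]
    rw [smul_eq_C_mul]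
    exact dvd_mul_of_dvd_right (X_sub_C_pow_dvd_prod ((hs ht).1 i) (hlt t' ht' hg)) _
  intro t ht
  by_cases ht0 : t = 0
  · subst ht0
    rw [Finset.sum_eq_single_of_mem 0 ht fun t' ht' hne => by rw [hnonzero t' ht' hne, zero_smul]]
      at hsum
    refine (smul_eq_zero.mp hsum).resolve_right ?_
    exact Finset.prod_ne_zero_iff.mpr fun i _ => pow_ne_zero _ (X_sub_C_ne_zero _)
  · exact hnonzero t ht ht0

end Polynomial

def leadingZeros : {n : ℕ} → (Fin n → ZMod 2) → ℕ
  | 0, _ => 0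
  | _ + 1, v => if v 0 = 0 then leadingZeros (Fin.tail v) + 1 else 0

@[simp] lemma leadingZeros_cons_zero {n : ℕ} (w : Fin n → ZMod 2) :
    leadingZeros (Fin.cons 0 w : Fin (n + 1) → ZMod 2) = leadingZeros w + 1 := by
  simp [leadingZeros]

@[simp] lemma leadingZeros_cons_one {n : ℕ} (w : Fin n → ZMod 2) :
    leadingZeros (Fin.cons 1 w : Fin (n + 1) → ZMod 2) = 0 := by
  simp [leadingZeros]

lemma leadingZeros_lt {n : ℕ} {v : Fin n → ZMod 2} (hv : v ≠ 0) : leadingZeros v < n := by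
  induction n with
  | zero => exact absurd (Subsingleton.elim v 0) hv
  | succ n ih =>
    cases v using Fin.consCases with | cons a w =>
    rcases ZMod.eq_zero_or_eq_one a with rfl | rfl
    · have hw : w ≠ 0 := by
        rintro rfl
        exact hv Matrix.cons_zero_zero
      simpa using ih hw
    · simp

lemma leadingZeros_lt_leadingZeros_add {n : ℕ} {v w : Fin n → ZMod 2} (hvw : v ≠ w)
    (h : leadingZeros v = leadingZeros w) : leadingZeros v < leadingZeros (v + w) := by
  induction n with
  | zero => exact absurd (Subsingleton.elim v w) hvw
  | succ n ih =>
    cases v using Fin.consCases with | cons a v =>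
    cases w using Fin.consCases with | cons b w =>
    rw [show (Fin.cons a v + Fin.cons b w : Fin (n + 1) → ZMod 2) = Fin.cons (a + b) (v + w) from
      Matrix.cons_add_cons a v b w]
    rcases ZMod.eq_zero_or_eq_one a with rfl | rfl <;>
      rcases ZMod.eq_zero_or_eq_one b with rfl | rfl <;> simp at h ⊢
    · exact ih (fun e => hvw (e ▸ rfl)) h
    · simp [show (1 : ZMod 2) + 1 = 0 from rfl]

def linForm {n : ℕ} : (Fin n → ZMod 2) →ₗ[ZMod 2] MvPolynomial (Fin n) (ZMod 2) :=
  Fintype.linearCombination (ZMod 2) X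

lemma zvec_eq_linForm {n : ℕ} (α : NzVec n) : zvec α = linForm α.1 := by
  simp [zvec, linForm, Fintype.linearCombination_apply, smul_eq_C_mul]

lemma linForm_injective {n : ℕ} : Function.Injective (linForm (n := n)) :=
  (linearIndependent_X (R := ZMod 2) (σ := Fin n)).fintypeLinearCombination_injective

lemma zvec_ne_zero {n : ℕ} (α : NzVec n) : zvec α ≠ 0 := by
  rw [zvec_eq_linForm]
  exact (map_ne_zero_iff _ linForm_injective).mpr α.2

lemma finSuccEquiv_linForm_cons {n : ℕ} (a : ZMod 2) (w : Fin n → ZMod 2) :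
    finSuccEquiv (ZMod 2) n (linForm (Fin.cons a w)) =
      a • Polynomial.X + Polynomial.C (linForm w) := by
  simp [linForm, Fintype.linearCombination_apply, Fin.sum_univ_succ, finSuccEquiv_X_zero,
    finSuccEquiv_X_succ, map_sum]

lemma finSuccEquiv_prod_linForm_pow {n : ℕ} (M e : (Fin (n + 1) → ZMod 2) → ℕ) :
    finSuccEquiv (ZMod 2) n (∏ v, linForm v ^ (M v - e v)) =
      (∏ w, linForm w ^ (M (Fin.cons 0 w) - e (Fin.cons 0 w))) •
        ∏ l, (Polynomial.X - Polynomial.C (linForm l)) ^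
          (M (Fin.cons 1 l) - e (Fin.cons 1 l)) := by
  rw [map_prod, prod_pi_fin_succ_zmod_two, Polynomial.smul_eq_C_mul, map_prod]
  simp only [map_pow, finSuccEquiv_linForm_cons, zero_smul, zero_add, one_smul,
    ZModModule.sub_eq_add]

-- Exponents are indexed by all of `F₂ⁿ`, so that the induction can split every vector as
-- `Fin.cons a w`; the zero vector carries the exponent `M 0 - e 0 = 0`.
theorem linearIndepOn_prod_linForm_pow (n : ℕ) (M : (Fin n → ZMod 2) → ℕ) (hM : M 0 = 0) :
    LinearIndepOn (ZMod 2) (fun e => ∏ v, linForm v ^ (M v - e v))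
      {e | e ≤ M ∧ (Function.support e).InjOn leadingZeros} := by
  induction n with
  | zero =>
    refine (LinearIndepOn.singleton (i := 0) ?_).mono fun e he => funext fun v => ?_
    · rw [Fintype.prod_subsingleton _ 0, hM]
      exact one_ne_zero
    · obtain rfl := Subsingleton.elim v 0
      exact Nat.le_zero.mp ((he.1 0).trans_eq hM)
  | succ n ih =>
    have hM0 : M (Fin.cons 0 0) = 0 := by
      rwa [show (Fin.cons 0 0 : Fin (n + 1) → ZMod 2) = 0 from Matrix.cons_zero_zero]
    set split := fun e : (Fin (n + 1) → ZMod 2) → ℕ =>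
      ((fun w => e (Fin.cons 0 w)), (fun l => e (Fin.cons 1 l)))
    refine LinearIndepOn.of_comp (finSuccEquiv (ZMod 2) n).toLinearMap ?_
    have hcomp :
        (finSuccEquiv (ZMod 2) n).toLinearMap ∘ (fun e => ∏ v, linForm v ^ (M v - e v)) =
          (fun p => (∏ w, linForm w ^ (M (Fin.cons 0 w) - p.1 w)) •
            ∏ l, (Polynomial.X - Polynomial.C (linForm l)) ^ (M (Fin.cons 1 l) - p.2 l)) ∘
              split :=
      funext (finSuccEquiv_prod_linForm_pow M)
    rw [hcomp]
    refine LinearIndepOn.comp_of_image (((ih _ hM0).smul_prod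
      (Polynomial.linearIndepOn_prod_X_sub_C_pow linForm_injective _)).mono ?_) ?_
    · rintro _ ⟨e, ⟨hle, hinj⟩, rfl⟩
      refine ⟨⟨fun w => hle _, fun w hw w' hw' h => ?_⟩,
        fun l => hle _, fun l hl l' hl' => ?_⟩
      · exact Fin.cons_right_injective (α := fun _ => ZMod 2) 0 (hinj hw hw' (by simp [h]))
      · exact Fin.cons_right_injective (α := fun _ => ZMod 2) 1 (hinj hl hl' (by simp))
    · intro e _ e' _ h
      funext v
      rw [← Fin.cons_self_tail v]
      rcases ZMod.eq_zero_or_eq_one (v 0) with h0 | h0 <;> rw [h0]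
      · exact congrFun (congrArg Prod.fst h) (Fin.tail v)
      · exact congrFun (congrArg Prod.snd h) (Fin.tail v)

def normalMonomials (n : ℕ) : Set (NzVec n →₀ ℕ) :=
  {d | Set.InjOn (fun α : NzVec n => leadingZeros α.1) d.support}

def relations (n : ℕ) : Set (MvPolynomial (NzVec n) (ZMod 2)) :=
  {p | ∃ α β γ : NzVec n, α ≠ β ∧ α ≠ γ ∧ β ≠ γ ∧ α.1 + β.1 + γ.1 = 0 ∧
    p = X α * X β + X α * X γ + X β * X γ}

lemma Finsupp.exists_eq_single_add_single_add {σ : Type*} {d : σ →₀ ℕ} {a b : σ}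
    (ha : a ∈ d.support) (hb : b ∈ d.support) (hab : a ≠ b) :
    ∃ d₀, d = single a 1 + single b 1 + d₀ := by
  classical
  refine exists_add_of_le fun v => ?_
  rw [mem_support_iff] at ha hb
  simp only [coe_add, Pi.add_apply, single_apply]
  split_ifs <;> subst_vars
  · exact absurd rfl hab
  all_goals omega

lemma MvPolynomial.monomial_single_add_single_add_eq {σ R : Type*} [CommRing R] [CharP R 2]
    (a b c : σ) (d₀ : σ →₀ ℕ) :
    monomial (Finsupp.single a 1 + Finsupp.single b 1 + d₀) (1 : R) =
      (X a * X b + X a * X c + X b * X c) * monomial d₀ 1 +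
        monomial (Finsupp.single a 1 + Finsupp.single c 1 + d₀) 1 +
        monomial (Finsupp.single b 1 + Finsupp.single c 1 + d₀) 1 := by
  have hX : ∀ a b : σ, monomial (Finsupp.single a 1 + Finsupp.single b 1 + d₀) (1 : R) =
      X a * X b * monomial d₀ 1 := fun a b => by simp only [X, monomial_mul, mul_one]
  rw [hX, hX, hX]
  linear_combination (-(X a * X c + X b * X c) * monomial d₀ (1 : R)) *
    (CharTwo.two_eq_zero : (2 : MvPolynomial σ R) = 0)

def NzVec.add {n : ℕ} (α β : NzVec n) (h : α ≠ β) : NzVec n :=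
  ⟨α.1 + β.1, fun h0 => h (Subtype.ext (by
    rwa [add_eq_zero_iff_eq_neg, ZModModule.neg_eq_self] at h0))⟩

lemma relation_mem_relations {n : ℕ} {α β : NzVec n} (h : α ≠ β) :
    X α * X β + X α * X (α.add β h) + X β * X (α.add β h) ∈ relations n := by
  refine ⟨α, β, α.add β h, h, fun h' => β.2 ?_, fun h' => α.2 ?_, ZModModule.add_self _,
    rfl⟩
  · simpa [NzVec.add] using congrArg Subtype.val h'
  · simpa [NzVec.add] using congrArg Subtype.val h'

def leadWeight (n : ℕ) : (NzVec n →₀ ℕ) →+ ℕ :=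
  Finsupp.weight fun α => n - leadingZeros α.1

lemma monomial_mem_restrictSupport_sup_span (n : ℕ) (d : NzVec n →₀ ℕ) :
    monomial d (1 : ZMod 2) ∈ restrictSupport (ZMod 2) (normalMonomials n) ⊔
      (Ideal.span (relations n)).restrictScalars (ZMod 2) := by
  induction hN : leadWeight n d using Nat.strong_induction_on generalizing d with
  | _ N ih =>
  by_cases hd : d ∈ normalMonomials n
  · exact Submodule.mem_sup_left ((monomial_mem_restrictSupport _).2 (Or.inl hd))
  obtain ⟨α, hα, β, hβ, hlead, hne⟩ : ∃ α ∈ d.support, ∃ β ∈ d.support,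
      leadingZeros α.1 = leadingZeros β.1 ∧ α ≠ β := by
    simpa [normalMonomials, Set.InjOn] using hd
  obtain ⟨d₀, rfl⟩ := Finsupp.exists_eq_single_add_single_add hα hβ hne
  have hlt : leadingZeros β.1 < leadingZeros (α.add β hne).1 :=
    hlead ▸ leadingZeros_lt_leadingZeros_add (Subtype.coe_ne_coe.mpr hne) hlead
  have hβn := leadingZeros_lt β.2
  have hsmaller : ∀ a : NzVec n, leadingZeros a.1 = leadingZeros β.1 →
      leadWeight n (Finsupp.single a 1 + Finsupp.single (α.add β hne) 1 + d₀) < N := by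
    intro a ha
    simp only [← hN, leadWeight, map_add, Finsupp.weight_single, one_smul]
    omega
  rw [monomial_single_add_single_add_eq α β (α.add β hne)]
  have hrel :=
    Ideal.mul_mem_right (monomial d₀ 1) _ (Ideal.subset_span (relation_mem_relations hne))
  exact add_mem (add_mem (Submodule.mem_sup_right hrel) (ih _ (hsmaller α hlead) _ rfl))
    (ih _ (hsmaller β rfl) _ rfl)

theorem restrictSupport_normalMonomials_sup_span_relations (n : ℕ) :
    restrictSupport (ZMod 2) (normalMonomials n) ⊔
      (Ideal.span (relations n)).restrictScalars (ZMod 2) = ⊤ := by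
  rw [eq_top_iff, ← (basisMonomials (NzVec n) (ZMod 2)).span_eq, Submodule.span_le]
  rintro _ ⟨d, rfl⟩
  rw [coe_basisMonomials]
  exact monomial_mem_restrictSupport_sup_span n d

def extendByZero {n : ℕ} (d : NzVec n → ℕ) (v : Fin n → ZMod 2) : ℕ :=
  if h : v = 0 then 0 else d ⟨v, h⟩

lemma prod_zvec_pow_eq {n : ℕ} (M d : NzVec n → ℕ) :
    ∏ α, zvec α ^ (M α - d α) = ∏ v, linForm v ^ (extendByZero M v - extendByZero d v) := by
  symm
  rw [← Finset.mul_prod_erase _ _ (Finset.mem_univ 0),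
    Finset.prod_subtype (p := (· ≠ 0)) (F := inferInstance) _ fun v => by simp]
  simp only [extendByZero, dite_true, map_zero, Nat.sub_self, pow_zero, one_mul]
  exact Finset.prod_congr rfl fun α _ => by simp [α.2, zvec_eq_linForm]

theorem linearIndepOn_prod_zvec_pow {n : ℕ} (M : NzVec n → ℕ) :
    LinearIndepOn (ZMod 2) (fun d : NzVec n →₀ ℕ => ∏ α, zvec α ^ (M α - d α))
      {d | d ∈ normalMonomials n ∧ ⇑d ≤ M} := by
  have hcomp : (fun d : NzVec n →₀ ℕ => ∏ α, zvec α ^ (M α - d α)) =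
      (fun e => ∏ v, linForm v ^ (extendByZero M v - e v)) ∘
        fun d : NzVec n →₀ ℕ => extendByZero d :=
    funext fun d => prod_zvec_pow_eq M d
  rw [hcomp]
  refine LinearIndepOn.comp_of_image
    ((linearIndepOn_prod_linForm_pow n _ (by simp [extendByZero])).mono ?_) ?_
  · rintro _ ⟨d, ⟨hd, hle⟩, rfl⟩
    refine ⟨fun v => ?_, fun v hv w hw h => ?_⟩
    · by_cases hv : v = 0 <;> simp [extendByZero, hv, hle _]
    · have hv0 : v ≠ 0 := fun h0 => hv (by simp [extendByZero, h0])
      have hw0 : w ≠ 0 := fun h0 => hw (by simp [extendByZero, h0])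
      have hvw : (⟨v, hv0⟩ : NzVec n) = ⟨w, hw0⟩ :=
        hd (by simpa [extendByZero, hv0] using hv) (by simpa [extendByZero, hw0] using hw) h
      exact congrArg Subtype.val hvw
  · intro d _ d' _ h
    ext α
    simpa [extendByZero, α.2] using congrFun h α.1

section Localization

variable {n : ℕ} {R : Type*} [CommRing R] [Algebra (ZMod 2) R]
  [Algebra (MvPolynomial (Fin n) (ZMod 2)) R] {zinv : NzVec n → R}

lemma aeval_eq_zero_of_mem_relations
    (hzinv : ∀ α, algebraMap (MvPolynomial (Fin n) (ZMod 2)) R (zvec α) * zinv α = 1)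
    {p : MvPolynomial (NzVec n) (ZMod 2)} (hp : p ∈ relations n) : aeval zinv p = 0 := by
  obtain ⟨α, β, γ, -, -, -, hsum, rfl⟩ := hp
  simp only [map_add, map_mul, aeval_X]
  refine mul_add_mul_add_mul_eq_zero (hzinv α) (hzinv β) (hzinv γ) ?_
  rw [← map_add, ← map_add, zvec_eq_linForm, zvec_eq_linForm, zvec_eq_linForm, ← map_add,
    ← map_add, hsum, map_zero, map_zero]

theorem linearIndepOn_aeval_monomial
    (hzinv : ∀ α, algebraMap (MvPolynomial (Fin n) (ZMod 2)) R (zvec α) * zinv α = 1)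
    (hA : Function.Injective (algebraMap (MvPolynomial (Fin n) (ZMod 2)) R)) :
    LinearIndepOn (ZMod 2) (fun d => aeval zinv (monomial d (1 : ZMod 2))) (normalMonomials n) := by
  classical
  refine linearIndepOn_of_finite _ fun t ht hfin => ?_
  set M : NzVec n → ℕ := fun α => ∑ d ∈ hfin.toFinset, d α
  have hle : ∀ d ∈ t, ⇑d ≤ M := fun d hd α =>
    Finset.single_le_sum (f := fun d : NzVec n →₀ ℕ => d α) (fun _ _ => Nat.zero_le _)
      (hfin.mem_toFinset.mpr hd)
  set A := algebraMap (MvPolynomial (Fin n) (ZMod 2)) R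
  -- Multiplying by `A (∏ z_α ^ M_α)` clears the denominators of the monomials indexed by `t`.
  refine LinearIndepOn.of_comp (LinearMap.mulLeft (ZMod 2) (A (∏ α, zvec α ^ M α))) ?_
  refine ((((linearIndepOn_prod_zvec_pow M).mono fun d hd => ⟨ht hd, hle d hd⟩).map_injOn
    (A.toAddMonoidHom.toZModLinearMap 2) hA.injOn).congr fun d hd => ?_)
  simp only [Function.comp_apply, AddMonoidHom.coe_toZModLinearMap, RingHom.toAddMonoidHom_eq_coe,
    AddMonoidHom.coe_coe, LinearMap.mulLeft_apply, aeval_monomial, map_one, one_mul,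
    Finsupp.prod_fintype _ _ (fun _ => pow_zero _), map_prod, map_pow, ← Finset.prod_mul_distrib]
  exact Finset.prod_congr rfl fun α _ => (pow_mul_pow_of_mul_eq_one (hzinv α) (hle d hd α)).symm

end Localization

theorem statement14_general (n : ℕ)
    (R : Type) [CommRing R] [Algebra (ZMod 2) R]
    [Algebra (MvPolynomial (Fin n) (ZMod 2)) R]
    [IsLocalization.Away (∏ α : NzVec n, zvec α) R]
    (zinv : NzVec n → R)
    (hzinv : ∀ α, algebraMap (MvPolynomial (Fin n) (ZMod 2)) R (zvec α) * zinv α = 1) :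
    RingHom.ker (MvPolynomial.aeval zinv :
        MvPolynomial (NzVec n) (ZMod 2) →ₐ[ZMod 2] R).toRingHom =
      Ideal.span {p : MvPolynomial (NzVec n) (ZMod 2) |
        ∃ α β γ : NzVec n, α ≠ β ∧ α ≠ γ ∧ β ≠ γ ∧ α.1 + β.1 + γ.1 = 0 ∧
          p = X α * X β + X α * X γ + X β * X γ} := by
  have hA : Function.Injective (algebraMap (MvPolynomial (Fin n) (ZMod 2)) R) :=
    IsLocalization.injective (M := Submonoid.powers (∏ α : NzVec n, zvec α)) R
      (powers_le_nonZeroDivisors_of_noZeroDivisors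
        (Finset.prod_ne_zero_iff.mpr fun α _ => zvec_ne_zero α))
  change _ = Ideal.span (relations n)
  have hrel : Ideal.span (relations n) ≤
      RingHom.ker (aeval zinv : MvPolynomial (NzVec n) (ZMod 2) →ₐ[ZMod 2] R).toRingHom :=
    Ideal.span_le.mpr fun p hp => aeval_eq_zero_of_mem_relations hzinv hp
  refine le_antisymm (fun p hp => ?_) hrel
  have hp' : p ∈ restrictSupport (ZMod 2) (normalMonomials n) ⊔
      (Ideal.span (relations n)).restrictScalars (ZMod 2) := by
    rw [restrictSupport_normalMonomials_sup_span_relations]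
    exact Submodule.mem_top
  obtain ⟨q, hq, i, hi, rfl⟩ := Submodule.mem_sup.mp hp'
  have hi0 : aeval zinv i = 0 := hrel hi
  have hq0 : q = 0 :=
    eq_zero_of_linearIndepOn_aeval_monomial (linearIndepOn_aeval_monomial hzinv hA) hq
      (by simpa [hi0] using hp)
  simpa [hq0] using hi

/-- The kernel of `h` equals the ideal generated by the polynomials
`t_αt_β + t_αt_γ + t_βt_γ` with `α,β,γ` pairwise distinct nonzero and `α + β + γ = 0`. -/
theorem statement14 (n : ℕ) (hn : 0 < n)
    (R : Type) [CommRing R] [Algebra (ZMod 2) R]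
    [Algebra (MvPolynomial (Fin n) (ZMod 2)) R]
    [IsScalarTower (ZMod 2) (MvPolynomial (Fin n) (ZMod 2)) R]
    [IsLocalization.Away (∏ α : NzVec n, zvec α) R]
    (zinv : NzVec n → R)
    (hzinv : ∀ α, algebraMap (MvPolynomial (Fin n) (ZMod 2)) R (zvec α) * zinv α = 1) :
    RingHom.ker (MvPolynomial.aeval zinv :
        MvPolynomial (NzVec n) (ZMod 2) →ₐ[ZMod 2] R).toRingHom =
      Ideal.span {p : MvPolynomial (NzVec n) (ZMod 2) |
        ∃ α β γ : NzVec n, α ≠ β ∧ α ≠ γ ∧ β ≠ γ ∧ α.1 + β.1 + γ.1 = 0 ∧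
          p = X α * X β + X α * X γ + X β * X γ} :=
  statement14_general n R zinv hzinv
end
end

section
/- Assume that z_1, …, z_m span the space of all homogeneous linear polynomials in x_1, …, x_n. Then h induces an isomorphism of F-algebras from the localization of F[t_1, …, t_m]/I at the (image of the) element t_1⋯t_m onto R; that is, (F[t_1, …, t_m]/I)[(t_1⋯t_m)^{-1}] ≅ R. -/
/-!
`h` factors through an injective map `F[t]/I → R` sending `t₁⋯t_m` to a unit, so the
localization embeds into `R`. It is onto because `R` is generated over `F` by the `zᵢ⁻¹` and by
`z₁⋯z_m = (t₁⋯t_m)⁻¹`: each `zᵢ` is `z₁⋯z_m · ∏_{k ≠ i} z_k⁻¹`, the `zᵢ` span the linear forms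
and hence generate `F[x]`, and every element of `R` is a polynomial times a power of
`(z₁⋯z_m)⁻¹`.
-/

open scoped TensorProduct
open MvPolynomial

noncomputable section

open Set

theorem IsLocalization.lift_injective_of_injective {A B P : Type*} [CommSemiring A]
    [CommSemiring B] [Algebra A B] [CommSemiring P] {M : Submonoid A} [IsLocalization M B]
    {g : A →+* P} (hg : ∀ y : M, IsUnit (g y)) (hinj : Function.Injective g) :
    Function.Injective (IsLocalization.lift hg : B → P) :=
  (IsLocalization.lift_injective_iff hg).2 fun x y =>
    ⟨fun h => by simpa using congrArg (IsLocalization.lift hg) h, fun h => congrArg _ (hinj h)⟩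

theorem MvPolynomial.adjoin_eq_top_of_X_mem_span {σ ι F : Type*} [CommSemiring F]
    {z : ι → MvPolynomial σ F} (h : ∀ j, X j ∈ Submodule.span F (range z)) :
    Algebra.adjoin F (range z) = ⊤ :=
  eq_top_iff.2 <| adjoin_range_X.symm.le.trans <| Algebra.adjoin_le <| by
    rintro _ ⟨j, rfl⟩
    exact Algebra.span_le_adjoin F _ (h j)

theorem IsLocalization.Away.adjoin_insert_prod_range_inv_eq_top {F P R ι : Type*}
    [CommSemiring F] [CommSemiring P] [Algebra F P] [CommSemiring R] [Algebra F R] [Algebra P R]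
    [IsScalarTower F P R] [Fintype ι] {z : ι → P} (hz : Algebra.adjoin F (range z) = ⊤)
    [IsLocalization.Away (∏ i, z i) R] {zinv : ι → R}
    (hzinv : ∀ i, algebraMap P R (z i) * zinv i = 1) :
    Algebra.adjoin F (insert (algebraMap P R (∏ i, z i)) (range zinv)) = ⊤ := by
  classical
  set T := Algebra.adjoin F (insert (algebraMap P R (∏ i, z i)) (range zinv))
  have hprod : algebraMap P R (∏ i, z i) * ∏ i, zinv i = 1 := by
    rw [map_prod, ← Finset.prod_mul_distrib]
    exact Finset.prod_eq_one fun i _ => hzinv i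
  have hprod_mem : algebraMap P R (∏ i, z i) ∈ T := Algebra.subset_adjoin (mem_insert _ _)
  have hzinv_mem (i : ι) : zinv i ∈ T := Algebra.subset_adjoin (mem_insert_of_mem _ ⟨i, rfl⟩)
  have hz_mem (i : ι) : algebraMap P R (z i) ∈ T := by
    have : algebraMap P R (z i) =
        algebraMap P R (∏ k, z k) * ∏ k ∈ Finset.univ.erase i, zinv k := by
      rw [map_prod, ← Finset.mul_prod_erase _ _ (Finset.mem_univ i), mul_assoc,
        ← Finset.prod_mul_distrib, Finset.prod_eq_one fun k _ => hzinv k, mul_one]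
    rw [this]
    exact T.mul_mem hprod_mem (T.prod_mem fun k _ => hzinv_mem k)
  have halg_mem (p : P) : algebraMap P R p ∈ T := by
    have : (Algebra.adjoin F (range z)).map (IsScalarTower.toAlgHom F P R) ≤ T := by
      rw [AlgHom.map_adjoin, Algebra.adjoin_le_iff]
      rintro _ ⟨_, ⟨i, rfl⟩, rfl⟩
      exact hz_mem i
    exact this ⟨p, hz ▸ Algebra.mem_top, rfl⟩
  refine eq_top_iff.2 fun r _ => ?_
  obtain ⟨k, a, ha⟩ := IsLocalization.Away.surj (∏ i, z i) r
  have : r = algebraMap P R a * (∏ i, zinv i) ^ k := by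
    rw [← ha, mul_assoc, ← mul_pow, hprod, one_pow, mul_one]
  rw [this]
  exact T.mul_mem (halg_mem a) (T.pow_mem (T.prod_mem fun i _ => hzinv_mem i) k)

theorem statement15_general
    (F : Type) [Field F] (n m : ℕ)
    (c : Fin m → Fin n → F)
    (hspan : ∀ j : Fin n,
      (X j : MvPolynomial (Fin n) F) ∈ Submodule.span F (Set.range (zpoly c)))
    (R : Type) [CommRing R] [Algebra F R] [Algebra (MvPolynomial (Fin n) F) R]
    [IsScalarTower F (MvPolynomial (Fin n) F) R]
    [IsLocalization.Away (∏ i, zpoly c i) R]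
    (zinv : Fin m → R)
    (hzinv : ∀ i, algebraMap (MvPolynomial (Fin n) F) R (zpoly c i) * zinv i = 1) :
    ∃ e : Localization.Away
        (Ideal.Quotient.mk
          (RingHom.ker (MvPolynomial.aeval zinv : MvPolynomial (Fin m) F →ₐ[F] R).toRingHom)
          (∏ i, X i)) ≃+* R,
      ∀ p : MvPolynomial (Fin m) F,
        e (algebraMap _ _
            (Ideal.Quotient.mk
              (RingHom.ker
                (MvPolynomial.aeval zinv : MvPolynomial (Fin m) F →ₐ[F] R).toRingHom) p))
          = MvPolynomial.aeval zinv p := by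
  set I := RingHom.ker (MvPolynomial.aeval zinv : MvPolynomial (Fin m) F →ₐ[F] R)
  set ψ := Ideal.kerLiftAlg (MvPolynomial.aeval zinv : MvPolynomial (Fin m) F →ₐ[F] R)
  set s := Ideal.Quotient.mk I (∏ i, X i)
  have hψs : ψ s = ∏ i, zinv i := by simp [ψ, s, I]
  have hprod : algebraMap _ R (∏ i, zpoly c i) * ψ s = 1 := by
    rw [hψs, map_prod, ← Finset.prod_mul_distrib]
    exact Finset.prod_eq_one fun i _ => hzinv i
  have hunit : IsUnit (ψ s) := IsUnit.of_mul_eq_one _ ((mul_comm _ _).trans hprod)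
  let e := IsLocalization.Away.liftAlgHom (S := Localization.Away s) s hunit
  have he (a) : e (algebraMap _ _ a) = ψ a := IsLocalization.Away.lift_eq s hunit a
  have hinj : Function.Injective e :=
    IsLocalization.lift_injective_of_injective _ (Ideal.kerLiftAlg_injective _)
  have hsurj : Function.Surjective e := by
    rw [← AlgHom.range_eq_top, eq_top_iff,
      ← IsLocalization.Away.adjoin_insert_prod_range_inv_eq_top
        (MvPolynomial.adjoin_eq_top_of_X_mem_span hspan) hzinv, Algebra.adjoin_le_iff]
    rintro _ (rfl | ⟨i, rfl⟩)
    · have : e (IsLocalization.Away.invSelf s) = algebraMap _ R (∏ i, zpoly c i) := by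
        refine hunit.mul_right_cancel ?_
        rw [hprod, ← he, ← map_mul, mul_comm, IsLocalization.Away.mul_invSelf, map_one]
      exact this ▸ e.mem_range_self _
    · have : e (algebraMap _ _ (Ideal.Quotient.mk I (X i))) = zinv i := by
        simp [he, ψ, I]
      exact this ▸ e.mem_range_self _
  exact ⟨RingEquiv.ofBijective e ⟨hinj, hsurj⟩, fun p => (he _).trans (Ideal.kerLiftAlg_mk _ _)⟩

/-- If `z₁,…,z_m` span the linear forms, then `h` induces an isomorphism
`(F[t₁,…,t_m]/I)[(t₁⋯t_m)⁻¹] ≅ R`.  The isomorphism is pinned down by the requirement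
that it is compatible with `h` on the image of `F[t₁,…,t_m]/I`. -/
theorem statement15
    (F : Type) [Field F] (n m : ℕ) (hn : 0 < n) (hm : 0 < m)
    (c : Fin m → Fin n → F) (hc : ∀ i, c i ≠ 0)
    (hspan : ∀ j : Fin n,
      (X j : MvPolynomial (Fin n) F) ∈ Submodule.span F (Set.range (zpoly c)))
    (R : Type) [CommRing R] [Algebra F R] [Algebra (MvPolynomial (Fin n) F) R]
    [IsScalarTower F (MvPolynomial (Fin n) F) R]
    [IsLocalization.Away (∏ i, zpoly c i) R]
    (zinv : Fin m → R)
    (hzinv : ∀ i, algebraMap (MvPolynomial (Fin n) F) R (zpoly c i) * zinv i = 1) :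
    ∃ e : Localization.Away
        (Ideal.Quotient.mk
          (RingHom.ker (MvPolynomial.aeval zinv : MvPolynomial (Fin m) F →ₐ[F] R).toRingHom)
          (∏ i, X i)) ≃+* R,
      ∀ p : MvPolynomial (Fin m) F,
        e (algebraMap _ _
            (Ideal.Quotient.mk
              (RingHom.ker
                (MvPolynomial.aeval zinv : MvPolynomial (Fin m) F →ₐ[F] R).toRingHom) p))
          = MvPolynomial.aeval zinv p :=
  statement15_general F n m c hspan R zinv hzinv
end
end
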